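/- arXiv:1412.6561 — 6 statements merged into one kernel-verified Lean document; each statement's English description precedes it below -/
import Mathlib

section
/- Let n ≥ 2 and let H : ℝⁿ → ℝ be of class C¹ on ℝⁿ \ {0}, positively homogeneous of degree 1 with H(ξ) > 0 for every ξ ≠ 0, and assume its unit ball B₁ᴴ = {ξ ∈ ℝⁿ : H(ξ) < 1} is strictly convex. Then condition (1.14), namely ⟨H(ξ)∇H(ξ), H*(x)∇H*(x)⟩ = ⟨ξ, x⟩ for all ξ, x ∈ ℝⁿ, holds if and only if there exists a symmetric positive definite matrix M ∈ Matₙ(ℝ) such that H(ξ) = √⟨Mξ, ξ⟩ for all ξ ∈ ℝⁿ. -/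
open scoped InnerProductSpace Classical

noncomputable section

/-- The dual function `H*(x) := sup_{ξ ∈ S^{n-1}} ⟨x, ξ⟩ / H(ξ)`. -/
def dualFn {n : ℕ} (H : EuclideanSpace ℝ (Fin n) → ℝ) (x : EuclideanSpace ℝ (Fin n)) : ℝ :=
  ⨆ ξ : Metric.sphere (0 : EuclideanSpace ℝ (Fin n)) 1,
    ⟪x, (ξ : EuclideanSpace ℝ (Fin n))⟫_ℝ / H ξ

/-- The map `ξ ↦ H(ξ)∇H(ξ)`, understood to be `0` at the origin. -/
def Psi {n : ℕ} (H : EuclideanSpace ℝ (Fin n) → ℝ) (ξ : EuclideanSpace ℝ (Fin n)) :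
    EuclideanSpace ℝ (Fin n) :=
  if ξ = 0 then 0 else H ξ • gradient H ξ
private lemma psi_sqrt_quadratic {n : ℕ}
    (A : EuclideanSpace ℝ (Fin n) →ₗ[ℝ] EuclideanSpace ℝ (Fin n))
    (hsa : ∀ u v, ⟪A u, v⟫_ℝ = ⟪u, A v⟫_ℝ)
    (hpd : ∀ ξ : EuclideanSpace ℝ (Fin n), ξ ≠ 0 → 0 < ⟪A ξ, ξ⟫_ℝ)
    (ξ : EuclideanSpace ℝ (Fin n)) :
    Psi (fun η => Real.sqrt ⟪A η, η⟫_ℝ) ξ = A ξ := by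
  by_cases hξ : ξ = 0
  · simp [Psi, hξ]
  · have hq : 0 < ⟪A ξ, ξ⟫_ℝ := hpd ξ hξ
    have hs : 0 < Real.sqrt ⟪A ξ, ξ⟫_ℝ := Real.sqrt_pos.2 hq
    have hA : HasFDerivAt (fun η => A η) (LinearMap.toContinuousLinearMap A) ξ :=
      (LinearMap.toContinuousLinearMap A).hasFDerivAt
    have hq' : HasFDerivAt (fun η : EuclideanSpace ℝ (Fin n) => ⟪A η, η⟫_ℝ)
        ((fderivInnerCLM ℝ (A ξ, ξ)).comp
          ((LinearMap.toContinuousLinearMap A).prod (ContinuousLinearMap.id ℝ _))) ξ :=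
      hA.inner ℝ (hasFDerivAt_id ξ)
    have hsq := HasDerivAt.comp_hasFDerivAt (f := fun η : EuclideanSpace ℝ (Fin n) => ⟪A η, η⟫_ℝ) ξ (Real.hasDerivAt_sqrt hq.ne') hq'
    have hgrad : HasGradientAt (fun η : EuclideanSpace ℝ (Fin n) => Real.sqrt ⟪A η, η⟫_ℝ)
        ((Real.sqrt ⟪A ξ, ξ⟫_ℝ)⁻¹ • A ξ) ξ := by
      rw [hasGradientAt_iff_hasFDerivAt]
      refine hsq.congr_fderiv ?_
      refine ContinuousLinearMap.ext fun v => ?_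
      simp only [InnerProductSpace.toDual_apply_apply, ContinuousLinearMap.smul_apply,
        ContinuousLinearMap.comp_apply, ContinuousLinearMap.prod_apply,
        ContinuousLinearMap.id_apply, fderivInnerCLM_apply, LinearMap.coe_toContinuousLinearMap',
        real_inner_smul_left]
      have h1 : ⟪A v, ξ⟫_ℝ = ⟪A ξ, v⟫_ℝ := by rw [hsa]; exact real_inner_comm _ _
      rw [h1]
      field_simp
      rw [smul_eq_mul, div_mul_eq_mul_div, one_mul, mul_div_assoc', div_eq_iff (mul_pos two_pos hs).ne']
      ring
    simp only [Psi, hξ, if_neg]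
    rw [hgrad.gradient, smul_smul, mul_inv_cancel₀ hs.ne']
    simp





private lemma dualFn_sqrt_quadratic {n : ℕ} (hn : 0 < n)
    (A B : EuclideanSpace ℝ (Fin n) →ₗ[ℝ] EuclideanSpace ℝ (Fin n))
    (hsa : ∀ u v, ⟪A u, v⟫_ℝ = ⟪u, A v⟫_ℝ)
    (hpd : ∀ ξ : EuclideanSpace ℝ (Fin n), ξ ≠ 0 → 0 < ⟪A ξ, ξ⟫_ℝ)
    (hAB : ∀ x, A (B x) = x) (x : EuclideanSpace ℝ (Fin n)) :
    dualFn (fun η => Real.sqrt ⟪A η, η⟫_ℝ) x = Real.sqrt ⟪B x, x⟫_ℝ := by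
  have hq0 : ∀ u : EuclideanSpace ℝ (Fin n), 0 ≤ ⟪A u, u⟫_ℝ := by
    intro u
    by_cases hu : u = 0
    · simp [hu]
    · exact (hpd u hu).le
  have hne : Nonempty (Metric.sphere (0 : EuclideanSpace ℝ (Fin n)) 1) := by
    have h0 : (EuclideanSpace.single (⟨0, hn⟩ : Fin n) (1:ℝ)) ≠ 0 := by
      intro h
      have := congrArg (fun v : EuclideanSpace ℝ (Fin n) => v ⟨0, hn⟩) h
      simp at this
    refine ⟨⟨‖EuclideanSpace.single (⟨0, hn⟩ : Fin n) (1:ℝ)‖⁻¹ •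
        EuclideanSpace.single (⟨0, hn⟩ : Fin n) (1:ℝ), ?_⟩⟩
    simp [mem_sphere_zero_iff_norm, norm_smul_inv_norm h0]
  -- upper bound
  have hub : ∀ ξ : Metric.sphere (0 : EuclideanSpace ℝ (Fin n)) 1,
      ⟪x, (ξ : EuclideanSpace ℝ (Fin n))⟫_ℝ / Real.sqrt ⟪A ξ, ξ⟫_ℝ ≤ Real.sqrt ⟪B x, x⟫_ℝ := by
    rintro ⟨ξ, hξs⟩
    have hξ0 : ξ ≠ 0 := by
      intro h
      rw [mem_sphere_zero_iff_norm] at hξs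
      simp [h] at hξs
    have ha : 0 < ⟪A ξ, ξ⟫_ℝ := hpd ξ hξ0
    have hsa' : 0 < Real.sqrt ⟪A ξ, ξ⟫_ℝ := Real.sqrt_pos.2 ha
    set a := ⟪A ξ, ξ⟫_ℝ with ha_def
    set b := ⟪x, ξ⟫_ℝ with hb_def
    set c := ⟪B x, x⟫_ℝ with hc_def
    have hcs : b ^ 2 ≤ c * a := by
      have h0 := hq0 (a • B x - b • ξ)
      have hc' : ⟪x, B x⟫_ℝ = c := real_inner_comm _ _
      have h2 : ⟪A ξ, B x⟫_ℝ = b := by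
        rw [hsa, hAB, real_inner_comm]
      have h3 : ⟪A (B x), ξ⟫_ℝ = b := by rw [hAB]
      have h4 : ⟪A (B x), B x⟫_ℝ = c := by rw [hAB, hc']
      simp only [map_sub, map_smul, inner_sub_left, inner_sub_right, real_inner_smul_left,
        real_inner_smul_right, h2, h3, h4] at h0
      nlinarith [h0, ha]
    have hc0 : 0 ≤ c := by
      have h5 : 0 ≤ ⟪A (B x), B x⟫_ℝ := hq0 _
      rwa [hAB, real_inner_comm] at h5
    have hb : b ≤ Real.sqrt c * Real.sqrt a := by
      calc b ≤ |b| := le_abs_self b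
        _ = Real.sqrt (b ^ 2) := (Real.sqrt_sq_eq_abs b).symm
        _ ≤ Real.sqrt (c * a) := Real.sqrt_le_sqrt hcs
        _ = Real.sqrt c * Real.sqrt a := Real.sqrt_mul hc0 a
    rw [div_le_iff₀ hsa']
    exact hb
  unfold dualFn
  by_cases hx : x = 0
  · simp only [hx, inner_zero_left, zero_div, map_zero, inner_zero_right]
    rw [Real.sqrt_zero]
    exact ciSup_const
  · have hBx0 : B x ≠ 0 := by
      intro h
      apply hx
      rw [← hAB x, h, map_zero]
    have hc_pos : 0 < ⟪B x, x⟫_ℝ := by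
      have : 0 < ⟪A (B x), B x⟫_ℝ := hpd _ hBx0
      rwa [hAB, real_inner_comm] at this
    refine le_antisymm (ciSup_le hub) ?_
    -- attained at the normalized B x
    set ξ₀ : EuclideanSpace ℝ (Fin n) := ‖B x‖⁻¹ • B x with hξ₀_def
    have hξ₀mem : ξ₀ ∈ Metric.sphere (0 : EuclideanSpace ℝ (Fin n)) 1 := by
      rw [mem_sphere_zero_iff_norm]
      exact norm_smul_inv_norm hBx0
    have hval : ⟪x, ξ₀⟫_ℝ / Real.sqrt ⟪A ξ₀, ξ₀⟫_ℝ = Real.sqrt ⟪B x, x⟫_ℝ := by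
      have hnorm : (0:ℝ) < ‖B x‖⁻¹ := inv_pos.2 (norm_pos_iff.2 hBx0)
      have h1 : ⟪x, ξ₀⟫_ℝ = ‖B x‖⁻¹ * ⟪B x, x⟫_ℝ := by
        rw [hξ₀_def, real_inner_smul_right, real_inner_comm]
      have h2 : ⟪A ξ₀, ξ₀⟫_ℝ = ‖B x‖⁻¹ ^ 2 * ⟪B x, x⟫_ℝ := by
        rw [hξ₀_def, map_smul, real_inner_smul_left, real_inner_smul_right, hAB,
          real_inner_comm]
        ring
      rw [h1, h2, Real.sqrt_mul (by positivity), Real.sqrt_sq hnorm.le, mul_div_mul_left _ _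
        hnorm.ne']
      exact Real.div_sqrt
    have hbdd : BddAbove (Set.range fun ξ : Metric.sphere (0 : EuclideanSpace ℝ (Fin n)) 1 =>
        ⟪x, (ξ : EuclideanSpace ℝ (Fin n))⟫_ℝ / Real.sqrt ⟪A ξ, ξ⟫_ℝ) := by
      refine ⟨Real.sqrt ⟪B x, x⟫_ℝ, ?_⟩
      rintro y ⟨ξ, rfl⟩
      exact hub ξ
    exact le_ciSup_of_le hbdd ⟨ξ₀, hξ₀mem⟩ hval.ge






private lemma fderiv_smul_arg {n : ℕ} (f : EuclideanSpace ℝ (Fin n) → ℝ) {t : ℝ} (ht : 0 < t)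
    (hf : ∀ y, f (t • y) = t * f y) (y : EuclideanSpace ℝ (Fin n))
    (hy : DifferentiableAt ℝ f (t • y)) :
    DifferentiableAt ℝ f y ∧ fderiv ℝ f y = fderiv ℝ f (t • y) := by
  set F := fderiv ℝ f (t • y) with hF
  have hL : HasFDerivAt (fun z : EuclideanSpace ℝ (Fin n) => t • z)
      (t • ContinuousLinearMap.id ℝ (EuclideanSpace ℝ (Fin n))) y := by
    exact (t • ContinuousLinearMap.id ℝ (EuclideanSpace ℝ (Fin n))).hasFDerivAt
  have h1 : HasFDerivAt (fun z => f (t • z))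
      (F.comp (t • ContinuousLinearMap.id ℝ (EuclideanSpace ℝ (Fin n)))) y :=
    hy.hasFDerivAt.comp y hL
  have h2 : HasFDerivAt (fun z => t * f z)
      (F.comp (t • ContinuousLinearMap.id ℝ (EuclideanSpace ℝ (Fin n)))) y := by
    convert h1 using 2 with z
    exact (hf z).symm
  have h3 : HasFDerivAt f
      (t⁻¹ • (F.comp (t • ContinuousLinearMap.id ℝ (EuclideanSpace ℝ (Fin n))))) y := by
    have := h2.const_mul t⁻¹
    refine this.congr_of_eventuallyEq (Filter.Eventually.of_forall fun z => ?_)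
    simp [smul_eq_mul, ← mul_assoc, inv_mul_cancel₀ ht.ne']
  have hFeq : t⁻¹ • (F.comp (t • ContinuousLinearMap.id ℝ (EuclideanSpace ℝ (Fin n)))) = F := by
    ext v
    simp [smul_smul, inv_mul_cancel₀ ht.ne']
  rw [hFeq] at h3
  exact ⟨h3.differentiableAt, h3.fderiv⟩

private lemma gradient_smul_arg {n : ℕ} (f : EuclideanSpace ℝ (Fin n) → ℝ) {t : ℝ} (ht : 0 < t)
    (hf : ∀ y, f (t • y) = t * f y) (x : EuclideanSpace ℝ (Fin n)) :
    gradient f (t • x) = gradient f x := by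
  have hf' : ∀ y, f (t⁻¹ • y) = t⁻¹ * f y := by
    intro y
    have := hf (t⁻¹ • y)
    rw [smul_smul, mul_inv_cancel₀ ht.ne', one_smul] at this
    rw [this, ← mul_assoc, inv_mul_cancel₀ ht.ne', one_mul]
  by_cases hd : DifferentiableAt ℝ f (t • x)
  · obtain ⟨_, h⟩ := fderiv_smul_arg f ht hf x hd
    rw [gradient, gradient, h]
  · have hd2 : ¬ DifferentiableAt ℝ f x := by
      intro h
      apply hd
      have := fderiv_smul_arg f (inv_pos.2 ht) hf' (t • x)
      rw [smul_smul, inv_mul_cancel₀ ht.ne', one_smul] at this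
      exact (this h).1
    rw [gradient_eq_zero_of_not_differentiableAt hd,
      gradient_eq_zero_of_not_differentiableAt hd2]

private lemma dualFn_smul {n : ℕ} (H : EuclideanSpace ℝ (Fin n) → ℝ) {t : ℝ} (ht : 0 < t)
    (x : EuclideanSpace ℝ (Fin n)) : dualFn H (t • x) = t * dualFn H x := by
  unfold dualFn
  rw [Real.mul_iSup_of_nonneg ht.le]
  congr 1
  funext ξ
  rw [real_inner_smul_left, mul_div_assoc]

private lemma psi_smul {n : ℕ} (H : EuclideanSpace ℝ (Fin n) → ℝ) {t : ℝ} (ht : 0 < t)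
    (hhomH : ∀ y, H (t • y) = t * H y) (x : EuclideanSpace ℝ (Fin n)) :
    Psi H (t • x) = t • Psi H x := by
  by_cases hx : x = 0
  · simp [Psi, hx]
  · have htx : t • x ≠ 0 := smul_ne_zero ht.ne' hx
    simp only [Psi, if_neg hx, if_neg htx]
    rw [hhomH, gradient_smul_arg H ht hhomH, smul_smul]

private lemma euler {n : ℕ} (H : EuclideanSpace ℝ (Fin n) → ℝ)
    (hreg : ContDiffOn ℝ 1 H {(0 : EuclideanSpace ℝ (Fin n))}ᶜ)
    (hhom : ∀ t : ℝ, 0 < t → ∀ ξ : EuclideanSpace ℝ (Fin n), ξ ≠ 0 → H (t • ξ) = t * H ξ)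
    (ξ : EuclideanSpace ℝ (Fin n)) (hξ : ξ ≠ 0) :
    ⟪gradient H ξ, ξ⟫_ℝ = H ξ := by
  have hmem : {(0 : EuclideanSpace ℝ (Fin n))}ᶜ ∈ nhds ξ :=
    (isOpen_compl_singleton).mem_nhds hξ
  have hdiff : DifferentiableAt ℝ H ξ :=
    ((hreg.differentiableOn one_ne_zero).differentiableAt hmem)
  have hline : HasDerivAt (fun s : ℝ => s • ξ) ξ 1 := by
    have := (hasDerivAt_id (1:ℝ)).smul_const ξ
    simpa using this
  have h1 : HasDerivAt (fun s : ℝ => H (s • ξ)) (fderiv ℝ H ξ ξ) 1 := by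
    have hd1 : HasFDerivAt H (fderiv ℝ H ξ) ((fun s : ℝ => s • ξ) 1) := by
      simpa using hdiff.hasFDerivAt
    exact hd1.comp_hasDerivAt 1 hline
  have h2 : HasDerivAt (fun s : ℝ => H (s • ξ)) (H ξ) 1 := by
    have hmul : HasDerivAt (fun s : ℝ => s * H ξ) (H ξ) 1 := by
      simpa using (hasDerivAt_id (1:ℝ)).mul_const (H ξ)
    refine hmul.congr_of_eventuallyEq ?_
    filter_upwards [eventually_gt_nhds zero_lt_one] with s hs
    exact hhom s hs ξ hξ
  have hfd : fderiv ℝ H ξ ξ = H ξ := h1.unique h2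
  have hgd : InnerProductSpace.toDual ℝ (EuclideanSpace ℝ (Fin n)) (gradient H ξ) =
      fderiv ℝ H ξ :=
    hdiff.hasGradientAt.hasFDerivAt.unique hdiff.hasFDerivAt ▸ rfl
  calc ⟪gradient H ξ, ξ⟫_ℝ
      = InnerProductSpace.toDual ℝ (EuclideanSpace ℝ (Fin n)) (gradient H ξ) ξ := rfl
    _ = fderiv ℝ H ξ ξ := by rw [hgd]
    _ = H ξ := hfd


/-- Theorem 1.2: for `H ∈ C¹(ℝⁿ \ {0})` positively 1-homogeneous, positive off
the origin and with strictly convex unit ball, condition (1.14), namely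
`⟨H(ξ)∇H(ξ), H*(x)∇H*(x)⟩ = ⟨ξ, x⟩` for all `ξ, x`, holds if and only if
`H(ξ) = √⟨Mξ, ξ⟩` for some symmetric positive definite matrix `M`. -/
theorem condition_1_14_iff_ellipsoid {n : ℕ} (hn : 2 ≤ n)
    (H : EuclideanSpace ℝ (Fin n) → ℝ)
    (hreg : ContDiffOn ℝ 1 H {(0 : EuclideanSpace ℝ (Fin n))}ᶜ)
    (hhom : ∀ t : ℝ, 0 < t → ∀ ξ : EuclideanSpace ℝ (Fin n), ξ ≠ 0 → H (t • ξ) = t * H ξ)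
    (hH0 : H 0 = 0)
    (hpos : ∀ ξ : EuclideanSpace ℝ (Fin n), ξ ≠ 0 → 0 < H ξ)
    (hconv : StrictConvex ℝ {ξ : EuclideanSpace ℝ (Fin n) | H ξ < 1}) :
    (∀ ξ x : EuclideanSpace ℝ (Fin n), ⟪Psi H ξ, Psi (dualFn H) x⟫_ℝ = ⟪ξ, x⟫_ℝ)
      ↔ ∃ M : Matrix (Fin n) (Fin n) ℝ, M.IsSymm ∧ M.PosDef ∧
          ∀ ξ : EuclideanSpace ℝ (Fin n),
            H ξ = Real.sqrt ⟪Matrix.toEuclideanLin M ξ, ξ⟫_ℝ := by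
  have hn0 : 0 < n := lt_of_lt_of_le two_pos hn
  constructor
  · -- forward direction
    intro cond
    have hHnonneg : ∀ ξ : EuclideanSpace ℝ (Fin n), 0 ≤ H ξ := by
      intro ξ
      by_cases hξ : ξ = 0
      · simp [hξ, hH0]
      · exact (hpos ξ hξ).le
    have hPsi_inner : ∀ ξ : EuclideanSpace ℝ (Fin n), ⟪Psi H ξ, ξ⟫_ℝ = H ξ ^ 2 := by
      intro ξ
      by_cases hξ : ξ = 0
      · simp [Psi, hξ, hH0]
      · simp only [Psi, if_neg hξ, real_inner_smul_left]
        rw [euler H hreg hhom ξ hξ]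
        ring
    have hzero : ∀ d : EuclideanSpace ℝ (Fin n),
        (∀ ξ, ⟪Psi H ξ, d⟫_ℝ = 0) → d = 0 := by
      intro d hd
      by_contra hd0
      have h1 := hd d
      rw [hPsi_inner d] at h1
      exact (pow_pos (hpos d hd0) 2).ne' h1
    have hadd : ∀ x y, Psi (dualFn H) (x + y) = Psi (dualFn H) x + Psi (dualFn H) y := by
      intro x y
      have h : ∀ ξ, ⟪Psi H ξ,
          Psi (dualFn H) (x + y) - (Psi (dualFn H) x + Psi (dualFn H) y)⟫_ℝ = 0 := by
        intro ξ
        rw [inner_sub_right, inner_add_right, cond, cond, cond, inner_add_right]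
        ring
      have := hzero _ h
      rwa [sub_eq_zero] at this
    have hzeromap : Psi (dualFn H) (0 : EuclideanSpace ℝ (Fin n)) = 0 := by simp [Psi]
    have hneg : ∀ x, Psi (dualFn H) (-x) = -Psi (dualFn H) x := by
      intro x
      have h := hadd x (-x)
      rw [add_neg_cancel, hzeromap] at h
      exact eq_neg_of_add_eq_zero_right h.symm
    have hsmul : ∀ (c : ℝ) (x : EuclideanSpace ℝ (Fin n)),
        Psi (dualFn H) (c • x) = c • Psi (dualFn H) x := by
      intro c x
      rcases lt_trichotomy c 0 with hc | hc | hc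
      · have hcpos : (0:ℝ) < -c := by linarith
        have h1 : Psi (dualFn H) ((-c) • x) = (-c) • Psi (dualFn H) x :=
          psi_smul _ hcpos (fun y => dualFn_smul H hcpos y) x
        have h2 : c • x = -((-c) • x) := by rw [neg_smul, neg_neg]
        rw [h2, hneg, h1, neg_smul, neg_neg]
      · rw [hc, zero_smul, zero_smul, hzeromap]
      · exact psi_smul _ hc (fun y => dualFn_smul H hc y) x
    let Bmap : EuclideanSpace ℝ (Fin n) →ₗ[ℝ] EuclideanSpace ℝ (Fin n) :=
      { toFun := Psi (dualFn H)
        map_add' := hadd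
        map_smul' := fun c x => hsmul c x }
    set C := LinearMap.adjoint Bmap with hC_def
    have hC : ∀ ξ, C (Psi H ξ) = ξ := by
      intro ξ
      apply ext_inner_right ℝ
      intro v
      rw [hC_def, LinearMap.adjoint_inner_left]
      exact cond ξ v
    have hCsurj : Function.Surjective C := fun ξ => ⟨Psi H ξ, hC ξ⟩
    have hCinj : Function.Injective C := LinearMap.injective_iff_surjective.2 hCsurj
    have hPadd : ∀ ξ η : EuclideanSpace ℝ (Fin n), Psi H (ξ + η) = Psi H ξ + Psi H η := by
      intro ξ η
      apply hCinj
      rw [map_add, hC, hC, hC]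
    have hPsmul : ∀ (c : ℝ) (ξ : EuclideanSpace ℝ (Fin n)), Psi H (c • ξ) = c • Psi H ξ := by
      intro c ξ
      apply hCinj
      rw [map_smul, hC, hC]
    let Amap : EuclideanSpace ℝ (Fin n) →ₗ[ℝ] EuclideanSpace ℝ (Fin n) :=
      { toFun := Psi H
        map_add' := hPadd
        map_smul' := fun c ξ => hPsmul c ξ }
    set S := (2:ℝ)⁻¹ • (Amap + LinearMap.adjoint Amap) with hS_def
    have hS_inner : ∀ ξ, ⟪S ξ, ξ⟫_ℝ = H ξ ^ 2 := by
      intro ξ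
      have h1 : ⟪LinearMap.adjoint Amap ξ, ξ⟫_ℝ = ⟪Amap ξ, ξ⟫_ℝ := by
        rw [LinearMap.adjoint_inner_left, real_inner_comm]
      rw [hS_def]
      simp only [LinearMap.smul_apply, LinearMap.add_apply, real_inner_smul_left,
        inner_add_left, h1]
      have h2 : ⟪Amap ξ, ξ⟫_ℝ = H ξ ^ 2 := hPsi_inner ξ
      rw [h2]
      ring
    have hSsym : LinearMap.IsSymmetric S := by
      intro u v
      rw [hS_def]
      simp only [LinearMap.smul_apply, LinearMap.add_apply, real_inner_smul_left,
        real_inner_smul_right, inner_add_left, inner_add_right]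
      rw [LinearMap.adjoint_inner_left, LinearMap.adjoint_inner_right]
      ring
    set N : Matrix (Fin n) (Fin n) ℝ := Matrix.toEuclideanLin.symm S with hN_def
    have hNS : Matrix.toEuclideanLin N = S := by
      rw [hN_def]
      exact LinearEquiv.apply_symm_apply _ _
    have herm : N.IsHermitian := by
      rw [Matrix.isHermitian_iff_isSymmetric, hNS]
      exact hSsym
    refine ⟨N, ?_, Matrix.PosDef.of_dotProduct_mulVec_pos herm ?_, ?_⟩
    · show N.transpose = N
      rw [← Matrix.conjTranspose_eq_transpose_of_trivial]
      exact herm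
    · intro x hx
      set ξ₀ : EuclideanSpace ℝ (Fin n) := (WithLp.equiv 2 (Fin n → ℝ)).symm x with hξ₀_def
      have hξ₀ : ξ₀ ≠ 0 := by
        intro h
        apply hx
        have := congrArg (WithLp.equiv 2 (Fin n → ℝ)) h
        simpa [hξ₀_def] using this
      have key : ⟪ξ₀, Matrix.toEuclideanLin N ξ₀⟫_ℝ =
          dotProduct (star x) (N.mulVec x) := by
        rw [EuclideanSpace.inner_eq_star_dotProduct, dotProduct_comm]; rfl
      rw [hNS] at key
      have hpos2 : 0 < ⟪ξ₀, S ξ₀⟫_ℝ := by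
        rw [real_inner_comm, hS_inner]
        exact pow_pos (hpos ξ₀ hξ₀) 2
      rw [key] at hpos2
      exact hpos2
    · intro ξ
      rw [hNS, hS_inner, Real.sqrt_sq (hHnonneg ξ)]

  · -- backward direction
    rintro ⟨M, hMsymm, hMpd, hHM⟩
    have hHfun : H = fun η => Real.sqrt ⟪Matrix.toEuclideanLin M η, η⟫_ℝ := funext hHM
    set A : EuclideanSpace ℝ (Fin n) →ₗ[ℝ] EuclideanSpace ℝ (Fin n) :=
      Matrix.toEuclideanLin M with hA_def
    have hsa : ∀ u v, ⟪A u, v⟫_ℝ = ⟪u, A v⟫_ℝ :=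
      Matrix.isHermitian_iff_isSymmetric.1 hMpd.isHermitian
    have hpdA : ∀ ξ : EuclideanSpace ℝ (Fin n), ξ ≠ 0 → 0 < ⟪A ξ, ξ⟫_ℝ := by
      intro ξ hξ
      have hx : (WithLp.equiv 2 (Fin n → ℝ)) ξ ≠ 0 := by
        intro h
        apply hξ
        have := congrArg (WithLp.equiv 2 (Fin n → ℝ)).symm h
        simpa using this
      have hd := hMpd.dotProduct_mulVec_pos hx
      have : ⟪ξ, A ξ⟫_ℝ = dotProduct (star ((WithLp.equiv 2 (Fin n → ℝ)) ξ))
          (M.mulVec ((WithLp.equiv 2 (Fin n → ℝ)) ξ)) := by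
        rw [EuclideanSpace.inner_eq_star_dotProduct, dotProduct_comm]; rfl
      rw [real_inner_comm, this]
      exact hd
    have hinj : Function.Injective A := by
      intro u v huv
      by_contra hne
      have hsub : A (u - v) = 0 := by rw [map_sub, huv, sub_self]
      have := hpdA (u - v) (sub_ne_zero.2 hne)
      rw [hsub, inner_zero_left] at this
      exact lt_irrefl 0 this
    have hbij : Function.Bijective A := ⟨hinj, LinearMap.injective_iff_surjective.1 hinj⟩
    set e := LinearEquiv.ofBijective A hbij with he_def
    set B : EuclideanSpace ℝ (Fin n) →ₗ[ℝ] EuclideanSpace ℝ (Fin n) :=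
      (e.symm : EuclideanSpace ℝ (Fin n) →ₗ[ℝ] EuclideanSpace ℝ (Fin n)) with hB_def
    have hAB : ∀ x, A (B x) = x := by
      intro x
      have : e (e.symm x) = x := e.apply_symm_apply x
      simpa [he_def, hB_def, LinearEquiv.ofBijective_apply] using this
    have hBsa : ∀ u v, ⟪B u, v⟫_ℝ = ⟪u, B v⟫_ℝ := by
      intro u v
      conv_lhs => rw [← hAB v]
      rw [← hsa, hAB]
    have hBpd : ∀ x : EuclideanSpace ℝ (Fin n), x ≠ 0 → 0 < ⟪B x, x⟫_ℝ := by
      intro x hx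
      have hBx0 : B x ≠ 0 := by
        intro h
        apply hx
        rw [← hAB x, h, map_zero]
      have := hpdA (B x) hBx0
      rwa [hAB, real_inner_comm] at this
    intro ξ x
    rw [hHfun]
    rw [psi_sqrt_quadratic A hsa hpdA ξ]
    have hdual : dualFn (fun η => Real.sqrt ⟪A η, η⟫_ℝ) =
        fun y => Real.sqrt ⟪B y, y⟫_ℝ :=
      funext (dualFn_sqrt_quadratic hn0 A B hsa hpdA hAB)
    rw [hdual, psi_sqrt_quadratic B hBsa hBpd x, hsa, hAB]

end
end

section
/- Let H ∈ C¹(ℝⁿ \ {0}) be positively homogeneous of degree d with non-negative values, and let B ∈ C¹([0, +∞)) with B(0) = 0. Assume that either d > 1, or d = 1 and B'(0) = 0. Then H extends, by setting H(0) := 0, to a continuous function on ℝⁿ, the composition B∘H is of class C¹(ℝⁿ), and ∂ᵢ(B∘H)(0) = 0 = lim_{x → 0} B'(H(x)) ∂ᵢH(x) for each i = 1, …, n. -/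
open scoped InnerProductSpace Topology

noncomputable section

/-! Homogeneity and compactness of the unit sphere give `|H x| ≤ M ‖x‖ ^ d` and, since `DH` is
homogeneous of degree `d - 1`, `‖DH x‖ ≤ M ‖x‖ ^ (d - 1)`. Hence `B (H x) = O(H x) = o(‖x‖)` when
`d > 1`, and `B (H x) = o(H x) = o(‖x‖)` when `d = 1` and `B'(0) = 0`, so `D(B ∘ H)(0) = 0`.
Likewise `B'(H x) • DH x → 0`: either `DH x → 0`, or `DH` stays bounded while `B'(H x) → 0`.
Away from the origin the chain rule needs only the right derivative of `B`, because `H ≥ 0`. -/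

open Set Filter Asymptotics

section Homogeneous

variable {E F : Type*} [NormedAddCommGroup E] [NormedSpace ℝ E]
  [NormedAddCommGroup F] [NormedSpace ℝ F]

def IsPosHomogeneous (d : ℝ) (f : E → F) : Prop :=
  ∀ t : ℝ, 0 < t → ∀ x : E, x ≠ 0 → f (t • x) = t ^ d • f x

variable {d : ℝ} {f : E → F}

theorem IsPosHomogeneous.fderiv (hf : IsPosHomogeneous d f)
    (hdiff : DifferentiableOn ℝ f {0}ᶜ) : IsPosHomogeneous (d - 1) (_root_.fderiv ℝ f) := by
  intro t ht x hx
  have hdiffAt : ∀ y : E, y ≠ 0 → DifferentiableAt ℝ f y := fun y hy =>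
    hdiff.differentiableAt (isOpen_compl_singleton.mem_nhds hy)
  have hchain : HasFDerivAt (fun y => f (t • y)) (t • _root_.fderiv ℝ f (t • x)) x := by
    simpa [Function.comp_def] using (hdiffAt _ (smul_ne_zero ht.ne' hx)).hasFDerivAt.comp x
      ((hasFDerivAt_id x).const_smul t)
  have hscaled : HasFDerivAt (fun y => f (t • y)) (t ^ d • _root_.fderiv ℝ f x) x :=
    ((hdiffAt x hx).hasFDerivAt.const_smul (t ^ d)).congr_of_eventuallyEq <| by
      filter_upwards [isOpen_compl_singleton.mem_nhds hx] with y hy using hf t ht y hy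
  rw [Real.rpow_sub_one ht.ne', div_eq_inv_mul, mul_smul, ← hchain.unique hscaled,
    inv_smul_smul₀ ht.ne']

theorem IsPosHomogeneous.isBigO_nhdsNE [ProperSpace E] (hf : IsPosHomogeneous d f)
    (hcont : ContinuousOn f {0}ᶜ) : f =O[𝓝[≠] 0] fun x => ‖x‖ ^ d := by
  obtain ⟨M, hM⟩ := (isCompact_sphere (0 : E) 1).exists_bound_of_continuousOn
    (hcont.mono fun x hx => ne_zero_of_norm_ne_zero (by simp_all))
  refine IsBigO.of_bound M ?_
  filter_upwards [self_mem_nhdsWithin] with x hx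
  have hnorm : 0 < ‖x‖ := norm_pos_iff.2 hx
  have hscale := hf ‖x‖ hnorm (‖x‖⁻¹ • x) (smul_ne_zero (inv_ne_zero hnorm.ne') hx)
  rw [smul_inv_smul₀ hnorm.ne'] at hscale
  rw [hscale, norm_smul, Real.norm_of_nonneg (by positivity), mul_comm]
  gcongr
  exact hM _ (by rw [mem_sphere_zero_iff_norm, norm_smul, norm_inv, norm_norm,
    inv_mul_cancel₀ hnorm.ne'])

theorem IsPosHomogeneous.continuous [ProperSpace E] (hf : IsPosHomogeneous d f) (hd : 0 < d)
    (hcont : ContinuousOn f {0}ᶜ) (hf0 : f 0 = 0) : Continuous f := by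
  refine continuous_iff_continuousAt.2 fun x => ?_
  rcases eq_or_ne x 0 with rfl | hx
  · rw [← continuousWithinAt_compl_self, ContinuousWithinAt, hf0]
    exact (hf.isBigO_nhdsNE hcont).trans_tendsto
      ((tendsto_norm_zero.rpow_const_nhds_zero hd).mono_left nhdsWithin_le_nhds)
  · exact hcont.continuousAt (isOpen_compl_singleton.mem_nhds hx)

end Homogeneous

theorem isLittleO_norm_rpow_norm {E : Type*} [SeminormedAddCommGroup E] {d : ℝ} (hd : 1 < d) :
    (fun x : E => ‖x‖ ^ d) =o[𝓝 0] fun x => ‖x‖ := by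
  have hsmall : (fun x : E => ‖x‖ ^ (d - 1)) =o[𝓝 0] fun _ => (1 : ℝ) :=
    (isLittleO_one_iff ℝ).2 (tendsto_norm_zero.rpow_const_nhds_zero (sub_pos.2 hd))
  refine (hsmall.mul_isBigO (isBigO_refl (fun x : E => ‖x‖) _)).congr (fun x => ?_) (by simp)
  rw [← Real.rpow_add_one' (norm_nonneg x) (by linarith), sub_add_cancel]

section Calculus

variable {E F : Type*} [NormedAddCommGroup E] [NormedSpace ℝ E]
  [NormedAddCommGroup F] [NormedSpace ℝ F]

theorem hasFDerivAt_zero_of_isLittleO {f : E → F} (hf0 : f 0 = 0)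
    (hf : f =o[𝓝[≠] 0] fun x => x) : HasFDerivAt f (0 : E →L[ℝ] F) 0 := by
  rw [← hasFDerivWithinAt_univ, ← hasFDerivWithinAt_sdiff_singleton_self,
    hasFDerivWithinAt_iff_isLittleO]
  simpa [hf0, ← compl_eq_univ_sdiff] using hf

theorem contDiff_one_of_hasFDerivAt_of_tendsto {f : E → F} {f' : E → E →L[ℝ] F}
    {L : E →L[ℝ] F} {a : E} (hf : ∀ x, x ≠ a → HasFDerivAt f (f' x) x)
    (hf' : ContinuousOn f' {a}ᶜ) (ha : HasFDerivAt f L a) (hlim : Tendsto f' (𝓝[≠] a) (𝓝 L)) :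
    ContDiff ℝ 1 f := by
  have hdiff : Differentiable ℝ f := fun x => by
    rcases eq_or_ne x a with rfl | hx
    exacts [ha.differentiableAt, (hf x hx).differentiableAt]
  refine contDiff_one_iff_fderiv.2 ⟨hdiff, continuous_iff_continuousAt.2 fun x => ?_⟩
  rcases eq_or_ne x a with rfl | hx
  · rw [← continuousWithinAt_compl_self, ContinuousWithinAt, ha.fderiv]
    exact hlim.congr' (eventually_nhdsWithin_of_forall fun y hy => (hf y hy).fderiv.symm)
  · refine (hf'.continuousAt (isOpen_compl_singleton.mem_nhds hx)).congr_of_eventuallyEq ?_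
    filter_upwards [isOpen_compl_singleton.mem_nhds hx] with y hy using (hf y hy).fderiv

end Calculus

section Composition

variable {E : Type*} [NormedAddCommGroup E] [NormedSpace ℝ E] [ProperSpace E]
  {d : ℝ} {H : E → ℝ}

theorem tendsto_smul_fderiv_nhdsNE_of_isPosHomogeneous {β : ℝ → ℝ} (hH : IsPosHomogeneous d H)
    (hreg : ContDiffOn ℝ 1 H {0}ᶜ) (hHt : Tendsto H (𝓝[≠] 0) (𝓝[Ici 0] 0))
    (hβ : ContinuousWithinAt β (Ici 0) 0) (hd : 1 < d ∨ d = 1 ∧ β 0 = 0) :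
    Tendsto (fun x => β (H x) • fderiv ℝ H x) (𝓝[≠] 0) (𝓝 0) := by
  have hβH : Tendsto (fun x => β (H x)) (𝓝[≠] 0) (𝓝 (β 0)) := hβ.tendsto.comp hHt
  have hH' : fderiv ℝ H =O[𝓝[≠] 0] fun x => ‖x‖ ^ (d - 1) :=
    (hH.fderiv (hreg.differentiableOn one_ne_zero)).isBigO_nhdsNE
      (hreg.continuousOn_fderiv_of_isOpen isOpen_compl_singleton le_rfl)
  rcases hd with hd | ⟨rfl, hβ0⟩
  · simpa using hβH.smul (hH'.trans_tendsto
      ((tendsto_norm_zero.rpow_const_nhds_zero (sub_pos.2 hd)).mono_left nhdsWithin_le_nhds))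
  · rw [hβ0] at hβH
    simp only [sub_self, Real.rpow_zero] at hH'
    exact hβH.zero_smul_isBoundedUnder_le ((isBigO_one_iff ℝ).1 hH')

theorem hasFDerivAt_comp_zero_of_isPosHomogeneous {B : ℝ → ℝ} {b : ℝ}
    (hH : IsPosHomogeneous d H) (hcont : ContinuousOn H {0}ᶜ)
    (hHt : Tendsto H (𝓝[≠] 0) (𝓝[Ici 0] 0)) (hH0 : H 0 = 0)
    (hB : HasDerivWithinAt B b (Ici 0) 0) (hB0 : B 0 = 0) (hd : 1 < d ∨ d = 1 ∧ b = 0) :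
    HasFDerivAt (fun x => B (H x)) (0 : E →L[ℝ] ℝ) 0 := by
  refine hasFDerivAt_zero_of_isLittleO (by simp [hH0, hB0]) ?_
  have hHO := hH.isBigO_nhdsNE hcont
  rw [← isLittleO_norm_right]
  rcases hd with hd | ⟨rfl, rfl⟩
  · have hBO : B =O[𝓝[Ici 0] 0] fun s : ℝ => s := by
      simpa [hB0] using hB.hasFDerivWithinAt.isBigO_sub
    exact (hBO.comp_tendsto hHt).trans_isLittleO
      (hHO.trans_isLittleO ((isLittleO_norm_rpow_norm hd).mono nhdsWithin_le_nhds))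
  · have hBo : B =o[𝓝[Ici 0] 0] fun s : ℝ => s := by
      simpa [hB0] using hasDerivWithinAt_iff_isLittleO.1 hB
    simpa [Function.comp_def] using (hBo.comp_tendsto hHt).trans_isBigO hHO

end Composition

/-- Lemma 2.2: let `H ∈ C¹(ℝⁿ \ {0})` be positively homogeneous of degree `d`
with non-negative values, extended by `H(0) = 0`, and let `B ∈ C¹([0, +∞))` with `B(0) = 0`.
If either `d > 1`, or `d = 1` and `B'(0) = 0`, then `H` is continuous on `ℝⁿ`, the composition
`B ∘ H` is of class `C¹(ℝⁿ)`, and `∂ᵢ(B∘H)(0) = 0 = lim_{x → 0} B'(H(x)) ∂ᵢH(x)`. -/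
theorem composition_C1_up_to_origin {n : ℕ} (d : ℝ)
    (H : EuclideanSpace ℝ (Fin n) → ℝ) (B : ℝ → ℝ)
    (hreg : ContDiffOn ℝ 1 H {(0 : EuclideanSpace ℝ (Fin n))}ᶜ)
    (hhom : ∀ t : ℝ, 0 < t → ∀ ξ : EuclideanSpace ℝ (Fin n), ξ ≠ 0 →
      H (t • ξ) = t ^ d * H ξ)
    (hnonneg : ∀ ξ : EuclideanSpace ℝ (Fin n), 0 ≤ H ξ) (hH0 : H 0 = 0)
    (hB : ContDiffOn ℝ 1 B (Set.Ici 0)) (hB0 : B 0 = 0)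
    (hd : 1 < d ∨ (d = 1 ∧ derivWithin B (Set.Ici 0) 0 = 0)) :
    Continuous H ∧
    ContDiff ℝ 1 (fun x => B (H x)) ∧
    fderiv ℝ (fun x => B (H x)) 0 = 0 ∧
    Filter.Tendsto (fun x => derivWithin B (Set.Ici 0) (H x) • gradient H x)
      (𝓝[{(0 : EuclideanSpace ℝ (Fin n))}ᶜ] 0) (𝓝 0) := by
  have hH : IsPosHomogeneous d H := hhom
  have hHc : Continuous H :=
    hH.continuous (by rcases hd with hd | ⟨rfl, -⟩ <;> linarith) hreg.continuousOn hH0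
  have hHt : Tendsto H (𝓝[≠] 0) (𝓝[Ici 0] 0) := tendsto_nhdsWithin_iff.2
    ⟨(hH0 ▸ hHc.tendsto 0).mono_left nhdsWithin_le_nhds, .of_forall hnonneg⟩
  have hB' : ContinuousOn (derivWithin B (Ici 0)) (Ici 0) :=
    hB.continuousOn_derivWithin (uniqueDiffOn_Ici 0) le_rfl
  have hderiv0 : HasFDerivAt (fun x => B (H x)) 0 0 :=
    hasFDerivAt_comp_zero_of_isPosHomogeneous hH hreg.continuousOn hHt hH0
      (hB.differentiableOn one_ne_zero 0 self_mem_Ici).hasDerivWithinAt hB0 hd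
  have hderiv : ∀ x, x ≠ 0 → HasFDerivAt (fun x => B (H x))
      (derivWithin B (Ici 0) (H x) • fderiv ℝ H x) x := fun x hx =>
    (hB.differentiableOn one_ne_zero _ (hnonneg x)).hasDerivWithinAt.comp_hasFDerivAt x
      ((hreg.differentiableOn one_ne_zero).differentiableAt
        (isOpen_compl_singleton.mem_nhds hx)).hasFDerivAt (.of_forall hnonneg)
  have hlim := tendsto_smul_fderiv_nhdsNE_of_isPosHomogeneous hH hreg hHt
    (hB' 0 self_mem_Ici) hd
  refine ⟨hHc, contDiff_one_of_hasFDerivAt_of_tendsto hderiv ?_ hderiv0 hlim,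
    hderiv0.fderiv, ?_⟩
  · exact (hB'.comp_continuous hHc hnonneg).continuousOn.smul
      (hreg.continuousOn_fderiv_of_isOpen isOpen_compl_singleton le_rfl)
  · simpa [gradient, Function.comp_def] using
      ((InnerProductSpace.toDual ℝ _).symm.continuous.tendsto 0).comp hlim

end
end

section
/- Let B ∈ C²((0, +∞)) ∩ C¹([0, +∞)) satisfy B(0) = B'(0) = 0 and B(t), B'(t), B''(t) > 0 for t > 0, and assume B satisfies the inequalities of (A)' for some p > 1, κ̄ ∈ (0,1) and positive γ̄, Γ̄. Fix M > 0 and define B̂(t) := B(t) for t ∈ [0, M) and B̂(t) := a(t − M)² + b(t − M) + c for t ≥ M, where a = B''(M)/2, b = B'(M), c = B(M). Then B̂ ∈ C²((0, +∞)) ∩ C¹([0, +∞)), and there exist positive constants γ̂ ≤ Γ̂ such that γ̂ t ≤ B̂'(t) ≤ Γ̂ t and γ̂ ≤ B̂''(t) ≤ Γ̂ for all t > 0; that is, B̂ satisfies the inequalities of (A)' with p = 2 (and κ̄ arbitrary). -/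
/-!
`Bhat` glues `B` on `(0, M)` to its second-order Taylor polynomial at `M`. Gluing two `Cⁿ`
functions that agree to order `n` at the junction gives a `Cⁿ` function, since the derivative of
the glued function is the glued derivative; hence `Bhat` is `C²` on `(0, ∞)`, and `C¹` at `0`
because it coincides with `B` there. On `(0, M]` the weight `(κ + t) ^ (p - 2)` stays between its
values at `κ > 0` and `κ + M`, so (A)' gives bounds with `p = 2`; beyond `M`, `Bhat''` is the
constant `B''(M)` and `Bhat'` is affine with slope `B''(M)` and value `B'(M)` at `M`, so the
bounds at `M` persist.
-/

open scoped Classical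

noncomputable section

open Set Filter Topology

def piecewiseAt (M : ℝ) (f g : ℝ → ℝ) : ℝ → ℝ := fun t => if t < M then f t else g t

namespace piecewiseAt

variable {M t d : ℝ} {f g : ℝ → ℝ}

theorem eventuallyEq_left (ht : t < M) : piecewiseAt M f g =ᶠ[𝓝 t] f :=
  eventually_of_mem (Iio_mem_nhds ht) fun _ hs => if_pos hs

theorem eventuallyEq_right (ht : M < t) : piecewiseAt M f g =ᶠ[𝓝 t] g :=
  eventually_of_mem (Ioi_mem_nhds ht) fun _ hs => if_neg (not_lt.2 (le_of_lt hs))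

theorem eqOn_Iic (h0 : f M = g M) : EqOn (piecewiseAt M f g) f (Iic M) := fun s hs => by
  rcases (mem_Iic.1 hs).lt_or_eq with hs | rfl
  · exact if_pos hs
  · exact (if_neg (lt_irrefl s)).trans h0.symm

theorem eqOn_Ici : EqOn (piecewiseAt M f g) g (Ici M) := fun _ hs => if_neg (not_lt.2 hs)

theorem hasDerivAt_self (h0 : f M = g M) (hf : HasDerivAt f d M) (hg : HasDerivAt g d M) :
    HasDerivAt (piecewiseAt M f g) d M := by
  have hl := hf.hasDerivWithinAt.congr (eqOn_Iic h0) (eqOn_Iic h0 self_mem_Iic)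
  have hr := hg.hasDerivWithinAt.congr (eqOn_Ici (f := f)) (eqOn_Ici self_mem_Ici)
  simpa [Iic_union_Ici] using hl.union hr

theorem deriv_eq (hf : DifferentiableAt ℝ f M) (hg : DifferentiableAt ℝ g M)
    (h0 : f M = g M) (h1 : deriv f M = deriv g M) :
    deriv (piecewiseAt M f g) = piecewiseAt M (deriv f) (deriv g) := by
  funext t
  rcases lt_trichotomy t M with ht | rfl | ht
  · rw [(eventuallyEq_left ht).deriv_eq]; exact (if_pos ht).symm
  · rw [(hasDerivAt_self h0 (h1 ▸ hf.hasDerivAt) hg.hasDerivAt).deriv]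
    exact (if_neg (lt_irrefl t)).symm
  · rw [(eventuallyEq_right ht).deriv_eq]; exact (if_neg (not_lt.2 ht.le)).symm

theorem continuousOn {U : Set ℝ} (hf : ContinuousOn f U) (hg : ContinuousOn g U)
    (h0 : f M = g M) : ContinuousOn (piecewiseAt M f g) U := by
  refine ContinuousOn.if ?_ (hf.mono inter_subset_left) (hg.mono inter_subset_left)
  rintro a ⟨-, ha⟩
  rw [show {a : ℝ | a < M} = Iio M from rfl, frontier_Iio, mem_singleton_iff] at ha
  rw [ha, h0]

theorem differentiableOn {U : Set ℝ} (hU : IsOpen U) (hf : DifferentiableOn ℝ f U)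
    (hg : DifferentiableOn ℝ g U) (h0 : f M = g M) (h1 : deriv f M = deriv g M) :
    DifferentiableOn ℝ (piecewiseAt M f g) U := by
  intro t ht
  have hfd := hf.differentiableAt (hU.mem_nhds ht)
  have hgd := hg.differentiableAt (hU.mem_nhds ht)
  refine DifferentiableAt.differentiableWithinAt ?_
  rcases lt_trichotomy t M with htM | rfl | htM
  · exact hfd.congr_of_eventuallyEq (eventuallyEq_left htM)
  · exact (hasDerivAt_self h0 (h1 ▸ hfd.hasDerivAt) hgd.hasDerivAt).differentiableAt
  · exact hgd.congr_of_eventuallyEq (eventuallyEq_right htM)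

theorem contDiffOn {U : Set ℝ} (hU : IsOpen U) (hM : M ∈ U) {n : ℕ}
    (hf : ContDiffOn ℝ n f U) (hg : ContDiffOn ℝ n g U)
    (hfg : ∀ k ≤ n, iteratedDeriv k f M = iteratedDeriv k g M) :
    ContDiffOn ℝ n (piecewiseAt M f g) U := by
  induction n generalizing f g with
  | zero =>
    simp only [CharP.cast_eq_zero, contDiffOn_zero] at hf hg ⊢
    simpa using continuousOn hf hg (hfg 0 le_rfl)
  | succ n ih =>
    have hfd := hf.differentiableOn (by simp)
    have hgd := hg.differentiableOn (by simp)
    have h0 : f M = g M := by simpa using hfg 0 (by omega)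
    have h1 : deriv f M = deriv g M := by simpa using hfg 1 (by omega)
    push_cast
    rw [contDiffOn_succ_iff_deriv_of_isOpen hU]
    refine ⟨differentiableOn hU hfd hgd h0 h1, by simp, ?_⟩
    rw [deriv_eq (hfd.differentiableAt (hU.mem_nhds hM)) (hgd.differentiableAt (hU.mem_nhds hM))
      h0 h1]
    have hn : (n : WithTop ℕ∞) + 1 ≤ (n + 1 : ℕ) := by push_cast; rfl
    refine ih (hf.deriv_of_isOpen hU hn) (hg.deriv_of_isOpen hU hn) fun k hk => ?_
    simpa only [iteratedDeriv_succ'] using hfg (k + 1) (by omega)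

end piecewiseAt

def taylorQuad (f : ℝ → ℝ) (M : ℝ) : ℝ → ℝ :=
  fun t => deriv (deriv f) M / 2 * (t - M) ^ 2 + deriv f M * (t - M) + f M

namespace taylorQuad

variable {f : ℝ → ℝ} {M : ℝ}

theorem contDiff {n : WithTop ℕ∞} : ContDiff ℝ n (taylorQuad f M) := by
  unfold taylorQuad; fun_prop

theorem hasDerivAt (t : ℝ) :
    HasDerivAt (taylorQuad f M) (deriv (deriv f) M * (t - M) + deriv f M) t := by
  have h := (hasDerivAt_id' t).sub_const M
  exact ((h.fun_pow 2).const_mul _).fun_add (h.const_mul _) |>.add_const (f M)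
    |>.congr_deriv (by push_cast; ring)

theorem deriv_eq : deriv (taylorQuad f M) = fun t => deriv (deriv f) M * (t - M) + deriv f M :=
  funext fun t => (hasDerivAt t).deriv

theorem deriv_deriv_eq : deriv (deriv (taylorQuad f M)) = fun _ => deriv (deriv f) M := by
  funext t
  rw [deriv_eq]
  simp

theorem apply_self : taylorQuad f M M = f M := by
  simp [taylorQuad]

theorem deriv_self : deriv (taylorQuad f M) M = deriv f M := by
  simp [deriv_eq]

theorem deriv_deriv_self : deriv (deriv (taylorQuad f M)) M = deriv (deriv f) M := by
  simp [deriv_deriv_eq]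

theorem iteratedDeriv_self :
    ∀ k ≤ 2, iteratedDeriv k f M = iteratedDeriv k (taylorQuad f M) M := by
  intro k hk
  interval_cases k <;> simp [iteratedDeriv_succ, apply_self, deriv_self, deriv_deriv_self]

theorem differentiable_deriv : Differentiable ℝ (deriv (taylorQuad f M)) := by
  rw [deriv_eq]; fun_prop

theorem linear_bounds {c C t : ℝ} (hb : c * M ≤ deriv f M ∧ deriv f M ≤ C * M)
    (ha : c ≤ deriv (deriv f) M ∧ deriv (deriv f) M ≤ C) (ht : M ≤ t) :
    c * t ≤ deriv (taylorQuad f M) t ∧ deriv (taylorQuad f M) t ≤ C * t ∧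
      c ≤ deriv (deriv (taylorQuad f M)) t ∧ deriv (deriv (taylorQuad f M)) t ≤ C := by
  rw [deriv_deriv_eq, deriv_eq]
  have hs : 0 ≤ t - M := sub_nonneg.2 ht
  exact ⟨by nlinarith [mul_le_mul_of_nonneg_right ha.1 hs],
    by nlinarith [mul_le_mul_of_nonneg_right ha.2 hs], ha⟩

end taylorQuad

theorem Real.rpow_mem_uIcc_of_mem_Icc {u v x : ℝ} (q : ℝ) (hu : 0 < u) (hx : x ∈ Icc u v) :
    x ^ q ∈ uIcc (u ^ q) (v ^ q) := by
  have hx0 : 0 < x := hu.trans_le hx.1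
  rcases le_total 0 q with hq | hq
  · exact mem_uIcc_of_le (rpow_le_rpow hu.le hx.1 hq) (rpow_le_rpow hx0.le hx.2 hq)
  · exact mem_uIcc_of_ge (rpow_le_rpow_of_nonpos hx0 hx.2 hq) (rpow_le_rpow_of_nonpos hu hx.1 hq)

theorem exists_linear_bounds_on_Ioc {p κ γ Γ M : ℝ} {B : ℝ → ℝ} (hκ : 0 < κ) (hγ : 0 < γ)
    (hΓ : 0 < Γ) (hM : 0 < M)
    (hA' : ∀ t ∈ Ioc 0 M,
      γ * (κ + t) ^ (p - 2) * t ≤ deriv B t ∧ deriv B t ≤ Γ * (κ + t) ^ (p - 2) * t ∧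
      γ * (κ + t) ^ (p - 2) ≤ deriv (deriv B) t ∧ deriv (deriv B) t ≤ Γ * (κ + t) ^ (p - 2)) :
    ∃ c C : ℝ, 0 < c ∧ ∀ t ∈ Ioc 0 M,
      c * t ≤ deriv B t ∧ deriv B t ≤ C * t ∧ c ≤ deriv (deriv B) t ∧ deriv (deriv B) t ≤ C := by
  have hmin : 0 < min (κ ^ (p - 2)) ((κ + M) ^ (p - 2)) :=
    lt_min (Real.rpow_pos_of_pos hκ _) (Real.rpow_pos_of_pos (by linarith) _)
  refine ⟨γ * min (κ ^ (p - 2)) ((κ + M) ^ (p - 2)), Γ * max (κ ^ (p - 2)) ((κ + M) ^ (p - 2)),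
    mul_pos hγ hmin, fun t ht => ?_⟩
  obtain ⟨hw₁, hw₂⟩ :=
    Real.rpow_mem_uIcc_of_mem_Icc (x := κ + t) (v := κ + M) (p - 2) hκ
      ⟨by linarith [ht.1], by linarith [ht.2]⟩
  have hlow := mul_le_mul_of_nonneg_left hw₁ hγ.le
  have hup := mul_le_mul_of_nonneg_left hw₂ hΓ.le
  obtain ⟨h₁, h₂, h₃, h₄⟩ := hA' t ht
  exact ⟨(mul_le_mul_of_nonneg_right hlow ht.1.le).trans h₁,
    h₂.trans (mul_le_mul_of_nonneg_right hup ht.1.le), hlow.trans h₃, h₄.trans hup⟩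

theorem quadratic_modification_general {p κ γ Γ : ℝ} (B : ℝ → ℝ)
    (hκ : κ ∈ Set.Ioo (0 : ℝ) 1) (hγ : 0 < γ) (hΓ : 0 < Γ)
    (hB2 : ContDiffOn ℝ 2 B (Set.Ioi 0)) (hB1 : ContDiffOn ℝ 1 B (Set.Ici 0))
    (hA' : ∀ t : ℝ, 0 < t →
      γ * (κ + t) ^ (p - 2) * t ≤ deriv B t ∧ deriv B t ≤ Γ * (κ + t) ^ (p - 2) * t ∧
      γ * (κ + t) ^ (p - 2) ≤ deriv (deriv B) t ∧ deriv (deriv B) t ≤ Γ * (κ + t) ^ (p - 2))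
    (M : ℝ) (hM : 0 < M) (Bhat : ℝ → ℝ)
    (hBhat : ∀ t : ℝ, Bhat t =
      if t < M then B t
      else deriv (deriv B) M / 2 * (t - M) ^ 2 + deriv B M * (t - M) + B M) :
    ContDiffOn ℝ 2 Bhat (Set.Ioi 0) ∧ ContDiffOn ℝ 1 Bhat (Set.Ici 0) ∧
    ∃ γ' Γ' : ℝ, 0 < γ' ∧ γ' ≤ Γ' ∧ ∀ t : ℝ, 0 < t →
      γ' * t ≤ deriv Bhat t ∧ deriv Bhat t ≤ Γ' * t ∧
      γ' ≤ deriv (deriv Bhat) t ∧ deriv (deriv Bhat) t ≤ Γ' := by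
  obtain rfl : Bhat = piecewiseAt M B (taylorQuad B M) := funext hBhat
  have hB'1 : ContDiffOn ℝ 1 (deriv B) (Ioi 0) := hB2.deriv_of_isOpen isOpen_Ioi (by norm_num)
  have hC2 : ContDiffOn ℝ 2 (piecewiseAt M B (taylorQuad B M)) (Ioi 0) := by
    exact_mod_cast piecewiseAt.contDiffOn isOpen_Ioi hM (n := 2) hB2
      taylorQuad.contDiff.contDiffOn taylorQuad.iteratedDeriv_self
  have hD1 := piecewiseAt.deriv_eq ((hB2.differentiableOn two_ne_zero).differentiableAt
    (Ioi_mem_nhds hM)) (taylorQuad.contDiff.differentiable two_ne_zero M)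
    taylorQuad.apply_self.symm taylorQuad.deriv_self.symm
  have hD2 := piecewiseAt.deriv_eq ((hB'1.differentiableOn one_ne_zero).differentiableAt
    (Ioi_mem_nhds hM)) (taylorQuad.differentiable_deriv M)
    taylorQuad.deriv_self.symm taylorQuad.deriv_deriv_self.symm
  obtain ⟨c, C, hc, hbounds⟩ := exists_linear_bounds_on_Ioc hκ.1 hγ hΓ hM fun t ht => hA' t ht.1
  have hbM := hbounds M ⟨hM, le_rfl⟩
  refine ⟨hC2, fun t ht => ?_, c, C, hc, hbM.2.2.1.trans hbM.2.2.2, fun t ht => ?_⟩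
  · rcases lt_or_ge t M with htM | htM
    · exact (hB1 t ht).congr_of_eventuallyEq
        ((piecewiseAt.eventuallyEq_left htM).filter_mono nhdsWithin_le_nhds) (if_pos htM)
    · exact ((hC2.contDiffAt (Ioi_mem_nhds (hM.trans_le htM))).of_le one_le_two).contDiffWithinAt
  · rw [hD1, hD2]
    unfold piecewiseAt
    split_ifs with htM
    · exact hbounds t ⟨ht, htM.le⟩
    · exact taylorQuad.linear_bounds ⟨hbM.1, hbM.2.1⟩ hbM.2.2 (not_lt.1 htM)

/-- Lemma 2.4: if `B ∈ C²((0,∞)) ∩ C¹([0,∞))` with `B(0) = B'(0) = 0`,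
`B, B', B'' > 0` on `(0,∞)`, satisfies the inequalities of (A)' with exponent `p > 1` and
`κ̄ ∈ (0,1)`, and `B̂` is the quadratic replacement of `B` beyond a fixed level `M > 0`,
then `B̂ ∈ C²((0,∞)) ∩ C¹([0,∞))` and `B̂` satisfies the inequalities of (A)' with `p = 2`. -/
theorem quadratic_modification {p κ γ Γ : ℝ} (B : ℝ → ℝ)
    (hp : 1 < p) (hκ : κ ∈ Set.Ioo (0 : ℝ) 1) (hγ : 0 < γ) (hΓ : 0 < Γ)
    (hB2 : ContDiffOn ℝ 2 B (Set.Ioi 0)) (hB1 : ContDiffOn ℝ 1 B (Set.Ici 0))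
    (hB0 : B 0 = 0) (hB'0 : derivWithin B (Set.Ici 0) 0 = 0)
    (hBpos : ∀ t : ℝ, 0 < t → 0 < B t ∧ 0 < deriv B t ∧ 0 < deriv (deriv B) t)
    (hA' : ∀ t : ℝ, 0 < t →
      γ * (κ + t) ^ (p - 2) * t ≤ deriv B t ∧ deriv B t ≤ Γ * (κ + t) ^ (p - 2) * t ∧
      γ * (κ + t) ^ (p - 2) ≤ deriv (deriv B) t ∧ deriv (deriv B) t ≤ Γ * (κ + t) ^ (p - 2))
    (M : ℝ) (hM : 0 < M) (Bhat : ℝ → ℝ)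
    (hBhat : ∀ t : ℝ, Bhat t =
      if t < M then B t
      else deriv (deriv B) M / 2 * (t - M) ^ 2 + deriv B M * (t - M) + B M) :
    ContDiffOn ℝ 2 Bhat (Set.Ioi 0) ∧ ContDiffOn ℝ 1 Bhat (Set.Ici 0) ∧
    ∃ γ' Γ' : ℝ, 0 < γ' ∧ γ' ≤ Γ' ∧ ∀ t : ℝ, 0 < t →
      γ' * t ≤ deriv Bhat t ∧ deriv Bhat t ≤ Γ' * t ∧
      γ' ≤ deriv (deriv Bhat) t ∧ deriv (deriv Bhat) t ≤ Γ' :=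
  quadratic_modification_general B hκ hγ hΓ hB2 hB1 hA' M hM Bhat hBhat
end
end

section
/- Let B ∈ C²((0, +∞)) ∩ C¹([0, +∞)) satisfy B(0) = B'(0) = 0 and B(t), B'(t), B''(t) > 0 for t > 0. (i) If B satisfies the inequalities of (A)' with constants p > 1, κ̄ ∈ [0,1), γ̄, Γ̄ > 0, then B'(t) t − B(t) ≥ (γ̄/Γ̄) B(t) for every t ≥ 0. (ii) If instead B satisfies (B)' (i.e. B ∈ C³_loc([0,+∞)) with B''(0) > 0 and B'''(0) = 0), then for every K > 0 there exists δ > 0 such that B'(t) t − B(t) ≥ δ B(t) for every t ∈ [0, K]. -/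
/-!
For `r ≥ 0` the function `φ_r(t) = B'(t) t - (1 + r) B(t)` vanishes at `0` and has derivative
`t B''(t) - r B'(t)`, so `φ_r ≥ 0` on every `[0, a]` on which `r B' ≤ t B''`. Under (A)' this
holds on `(0, ∞)` with `r = γ/Γ`, because `B'(t)` and `t B''(t)` are both comparable to
`(κ + t)^(p-2) t`. Under (B)', `B''` stays between `c/2` and `2c` near `0` (with `c = B''(0)`),
so `B'(t) ≤ 2ct` and `r = 1/4` works on some `[0, η]`; on `[η, K]` the function `φ_0` is
nondecreasing and `B` is bounded, which gives `δ = min (1/4) (φ_0(η) / max_{[0,K]} B)`.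
-/

open Set Filter Topology

theorem deriv_eq_zero_of_derivWithin_eq_zero {𝕜 F : Type*} [NontriviallyNormedField 𝕜]
    [NormedAddCommGroup F] [NormedSpace 𝕜 F] {f : 𝕜 → F} {s : Set 𝕜} {x : 𝕜}
    (hs : UniqueDiffWithinAt 𝕜 s x) (h : derivWithin f s x = 0) : deriv f x = 0 := by
  by_cases hf : DifferentiableAt 𝕜 f x
  · rwa [← hf.derivWithin hs]
  · exact deriv_zero_of_not_differentiableAt hf

theorem ContDiffOn.continuousOn_deriv_Ici {f : ℝ → ℝ} (hf : ContDiffOn ℝ 1 f (Ici 0))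
    (h0 : derivWithin f (Ici 0) 0 = 0) : ContinuousOn (deriv f) (Ici 0) := by
  refine (hf.continuousOn_derivWithin (uniqueDiffOn_Ici 0) le_rfl).congr fun x hx => ?_
  rcases (mem_Ici.1 hx).eq_or_lt with rfl | hx
  · rw [h0, deriv_eq_zero_of_derivWithin_eq_zero (uniqueDiffOn_Ici _ _ hx) h0]
  · exact (derivWithin_of_mem_nhds (Ici_mem_nhds hx)).symm

theorem ContDiffOn.tendsto_deriv_deriv_nhdsGT {f : ℝ → ℝ} (hf : ContDiffOn ℝ 2 f (Ici 0)) :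
    Tendsto (deriv (deriv f)) (𝓝[>] 0) (𝓝 (iteratedDerivWithin 2 f (Ici 0) 0)) := by
  have hc := hf.continuousOn_iteratedDerivWithin le_rfl (uniqueDiffOn_Ici 0) 0 self_mem_Ici
  refine (hc.mono Ioi_subset_Ici_self).tendsto.congr' ?_
  filter_upwards [self_mem_nhdsWithin] with x hx
  rw [iteratedDerivWithin_eq_iteratedDeriv (uniqueDiffOn_Ici 0) (hf.contDiffAt (Ici_mem_nhds hx))
    (mem_Ici.2 (le_of_lt hx)), iteratedDeriv_succ, iteratedDeriv_one]

theorem div_mul_le_mul_of_le_mul_mul {m M X x a b : ℝ} (hm : 0 ≤ m) (hM : 0 < M) (hx : 0 ≤ x)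
    (ha : a ≤ M * X * x) (hb : m * X ≤ b) : m / M * a ≤ x * b :=
  calc m / M * a ≤ m / M * (M * X * x) := by gcongr
    _ = m * X * x := by field_simp
    _ ≤ b * x := by gcongr
    _ = x * b := mul_comm _ _

section

variable {f f' f'' : ℝ → ℝ}

theorem monotoneOn_deriv_mul_sub {D : Set ℝ} {r : ℝ} (hD : Convex ℝ D)
    (hf : ContinuousOn f D) (hf' : ContinuousOn f' D)
    (hff' : ∀ x ∈ interior D, HasDerivAt f (f' x) x)
    (hf'f'' : ∀ x ∈ interior D, HasDerivAt f' (f'' x) x)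
    (hr : ∀ x ∈ interior D, r * f' x ≤ x * f'' x) :
    MonotoneOn (fun t => f' t * t - (1 + r) * f t) D := by
  refine monotoneOn_of_hasDerivWithinAt_nonneg hD ((hf'.mul continuousOn_id).sub
    (hf.const_smul (1 + r))) (fun x hx => (((hf'f'' x hx).mul (hasDerivAt_id x)).sub
      ((hff' x hx).const_mul (1 + r))).hasDerivWithinAt) fun x hx => ?_
  have := hr x hx
  simp only [id, mul_one]
  linarith

theorem one_add_mul_le_deriv_mul {D : Set ℝ} {r t : ℝ} (hD : Convex ℝ D)
    (hf : ContinuousOn f D) (hf' : ContinuousOn f' D)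
    (hff' : ∀ x ∈ interior D, HasDerivAt f (f' x) x)
    (hf'f'' : ∀ x ∈ interior D, HasDerivAt f' (f'' x) x)
    (hr : ∀ x ∈ interior D, r * f' x ≤ x * f'' x) (h0 : 0 ∈ D) (hf0 : f 0 = 0)
    (ht : t ∈ D) (ht0 : 0 ≤ t) : (1 + r) * f t ≤ f' t * t := by
  have := monotoneOn_deriv_mul_sub hD hf hf' hff' hf'f'' hr h0 ht ht0
  simp only [mul_zero, hf0, sub_zero] at this
  linarith

variable {c : ℝ} (hf : ContinuousOn f (Ici 0)) (hf' : ContinuousOn f' (Ici 0))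
  (hff' : ∀ x > 0, HasDerivAt f (f' x) x) (hf'f'' : ∀ x > 0, HasDerivAt f' (f'' x) x)
  (hf0 : f 0 = 0)
include hf hf' hff' hf'f'' hf0

theorem one_add_mul_le_deriv_mul_Ici {r t : ℝ} (hr : ∀ x > 0, r * f' x ≤ x * f'' x)
    (ht : 0 ≤ t) : (1 + r) * f t ≤ f' t * t :=
  one_add_mul_le_deriv_mul (convex_Ici 0) hf hf' (by simpa using hff') (by simpa using hf'f'')
    (by simpa using hr) self_mem_Ici hf0 ht ht

theorem exists_forall_Icc_one_add_mul_le_deriv_mul (hf'0 : f' 0 = 0) (hc : 0 < c)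
    (hlim : Tendsto f'' (𝓝[>] 0) (𝓝 c)) :
    ∃ η > 0, ∃ r > 0, ∀ t ∈ Icc 0 η, (1 + r) * f t ≤ f' t * t := by
  obtain ⟨η, hη, hf''⟩ := (mem_nhdsGT_iff_exists_Ioo_subset (a := (0:ℝ))).1
    (hlim (Ioo_mem_nhds (half_lt_self hc) (lt_two_mul_self hc)))
  have hint : ∀ x ∈ interior (Icc 0 η), x ∈ Ioo 0 η := fun x hx => by
    rwa [interior_Icc] at hx
  have hf'f''η : ∀ x ∈ interior (Icc 0 η), HasDerivAt f' (f'' x) x :=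
    fun x hx => hf'f'' x (hint x hx).1
  have hbound : ∀ x ∈ Icc 0 η, f' x ≤ 2 * c * x := fun x hx => by
    simpa [hf'0] using (convex_Icc 0 η).image_sub_le_mul_sub_of_deriv_le
      (hf'.mono Icc_subset_Ici_self)
      (fun y hy => (hf'f''η y hy).differentiableAt.differentiableWithinAt)
      (fun y hy => (hf'f''η y hy).deriv ▸ (hf'' (hint y hy)).2.le)
      0 (left_mem_Icc.2 hη.le) x hx hx.1
  refine ⟨η, hη, c / 2 / (2 * c), by positivity, fun t ht => one_add_mul_le_deriv_mul
    (convex_Icc 0 η) (hf.mono Icc_subset_Ici_self) (hf'.mono Icc_subset_Ici_self)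
    (fun x hx => hff' x (hint x hx).1) hf'f''η (fun x hx => ?_) (left_mem_Icc.2 hη.le) hf0
    ht ht.1⟩
  exact div_mul_le_mul_of_le_mul_mul (X := 1) (by positivity) (by positivity) (hint x hx).1.le
    (by rw [mul_one]; exact hbound x (interior_subset hx))
    (by rw [mul_one]; exact (hf'' (hint x hx)).1.le)

theorem exists_pos_forall_Icc_mul_le_deriv_mul_sub (hf'0 : f' 0 = 0)
    (hfpos : ∀ x > 0, 0 < f x) (hf''nonneg : ∀ x > 0, 0 ≤ f'' x) (hc : 0 < c)
    (hlim : Tendsto f'' (𝓝[>] 0) (𝓝 c)) {K : ℝ} (hK : 0 < K) :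
    ∃ δ > 0, ∀ t ∈ Icc 0 K, δ * f t ≤ f' t * t - f t := by
  obtain ⟨η, hη, r, hr, hnear⟩ :=
    exists_forall_Icc_one_add_mul_le_deriv_mul hf hf' hff' hf'f'' hf0 hf'0 hc hlim
  have hmono := monotoneOn_deriv_mul_sub (r := 0) (convex_Ici 0) hf hf'
    (by simpa using hff') (by simpa using hf'f'')
    (by simpa using fun x hx => mul_nonneg hx.le (hf''nonneg x hx))
  obtain ⟨x₀, -, hmax⟩ := isCompact_Icc.exists_isMaxOn (nonempty_Icc.2 hK.le)
    (hf.mono Icc_subset_Ici_self)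
  have hM : 0 < f x₀ := (hfpos K hK).trans_le (hmax (right_mem_Icc.2 hK.le))
  have hφη : r * f η ≤ f' η * η - f η := by linarith [hnear η (right_mem_Icc.2 hη.le)]
  have hφη_pos : 0 < f' η * η - f η := (mul_pos hr (hfpos η hη)).trans_le hφη
  refine ⟨min r ((f' η * η - f η) / f x₀), lt_min hr (div_pos hφη_pos hM), fun t ht => ?_⟩
  have hft : 0 ≤ f t := ht.1.eq_or_lt.elim (fun h => h ▸ hf0.ge) fun h => (hfpos t h).le
  rcases le_or_gt t η with htη | hηt
  · calc min r _ * f t ≤ r * f t := by gcongr; exact min_le_left _ _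
      _ ≤ f' t * t - f t := by linarith [hnear t ⟨ht.1, htη⟩]
  · calc min r _ * f t ≤ (f' η * η - f η) / f x₀ * f t := by gcongr; exact min_le_right _ _
      _ ≤ f' η * η - f η := by
        rw [div_mul_eq_mul_div, div_le_iff₀ hM]
        exact mul_le_mul_of_nonneg_left (hmax ht) hφη_pos.le
      _ ≤ f' t * t - f t := by
        simpa using hmono (mem_Ici.2 hη.le) (mem_Ici.2 ht.1) hηt.le

end

/-- Lemma 5.1: let `B ∈ C²((0,∞)) ∩ C¹([0,∞))` with `B(0) = B'(0) = 0` and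
`B, B', B'' > 0` on `(0,∞)`. (i) If `B` satisfies the inequalities of (A)' with constants
`p > 1`, `κ ∈ [0,1)`, `γ, Γ > 0`, then `B'(t)t − B(t) ≥ (γ/Γ) B(t)` for every `t ≥ 0`.
(ii) If `B` satisfies (B)' (`B ∈ C³_loc([0,∞))` with `B''(0) > 0` and `B'''(0) = 0`), then
for every `K > 0` there is `δ > 0` with `B'(t)t − B(t) ≥ δ B(t)` for every `t ∈ [0, K]`. -/
theorem coercivity_inequality (B : ℝ → ℝ)
    (hB2 : ContDiffOn ℝ 2 B (Set.Ioi 0)) (hB1 : ContDiffOn ℝ 1 B (Set.Ici 0))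
    (hB0 : B 0 = 0) (hB'0 : derivWithin B (Set.Ici 0) 0 = 0)
    (hBpos : ∀ t : ℝ, 0 < t → 0 < B t ∧ 0 < deriv B t ∧ 0 < deriv (deriv B) t) :
    (∀ p κ γ Γ : ℝ, 1 < p → κ ∈ Set.Ico (0 : ℝ) 1 → 0 < γ → 0 < Γ →
      (∀ t : ℝ, 0 < t →
        γ * (κ + t) ^ (p - 2) * t ≤ deriv B t ∧ deriv B t ≤ Γ * (κ + t) ^ (p - 2) * t ∧
        γ * (κ + t) ^ (p - 2) ≤ deriv (deriv B) t ∧ deriv (deriv B) t ≤ Γ * (κ + t) ^ (p - 2)) →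
      ∀ t : ℝ, 0 ≤ t → γ / Γ * B t ≤ deriv B t * t - B t) ∧
    ((ContDiffOn ℝ 3 B (Set.Ici 0) ∧ 0 < iteratedDerivWithin 2 B (Set.Ici 0) 0 ∧
        iteratedDerivWithin 3 B (Set.Ici 0) 0 = 0) →
      ∀ K : ℝ, 0 < K → ∃ δ : ℝ, 0 < δ ∧
        ∀ t ∈ Set.Icc (0 : ℝ) K, δ * B t ≤ deriv B t * t - B t) := by
  have hB : ContinuousOn B (Ici 0) := hB1.continuousOn
  have hB' : ContinuousOn (deriv B) (Ici 0) := hB1.continuousOn_deriv_Ici hB'0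
  have hBB' : ∀ x > 0, HasDerivAt B (deriv B x) x := fun x hx =>
    ((hB2.differentiableOn two_ne_zero).differentiableAt (Ioi_mem_nhds hx)).hasDerivAt
  have hB'B'' : ∀ x > 0, HasDerivAt (deriv B) (deriv (deriv B) x) x := fun x hx =>
    (((hB2.deriv_of_isOpen isOpen_Ioi (m := 1) le_rfl).differentiableOn
      one_ne_zero).differentiableAt (Ioi_mem_nhds hx)).hasDerivAt
  refine ⟨fun p κ γ Γ _ _ hγ hΓ hA t ht => ?_, fun ⟨hB3, hc, _⟩ K hK => ?_⟩
  · have := one_add_mul_le_deriv_mul_Ici hB hB' hBB' hB'B'' hB0 (fun x hx =>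
      div_mul_le_mul_of_le_mul_mul hγ.le hΓ hx.le (hA x hx).2.1 (hA x hx).2.2.1) ht
    linarith
  · exact exists_pos_forall_Icc_mul_le_deriv_mul_sub hB hB' hBB' hB'B'' hB0
      (deriv_eq_zero_of_derivWithin_eq_zero (uniqueDiffOn_Ici 0 0 self_mem_Ici) hB'0)
      (fun x hx => (hBpos x hx).1) (fun x hx => (hBpos x hx).2.2.le) hc
      (hB3.of_le (by norm_num)).tendsto_deriv_deriv_nhdsGT hK
end

section
/- Let H ∈ C¹(ℝⁿ \ {0}) be positively homogeneous of degree 1 with H(ξ) > 0 for all ξ ≠ 0, extended by H(0) = 0, and assume the unit ball B₁ᴴ = {ξ : H(ξ) < 1} is strictly convex. Then condition (1.12), namely sgn⟨H(ξ)∇H(ξ), H*(x)∇H*(x)⟩ = sgn⟨ξ, x⟩ for all ξ, x ∈ ℝⁿ, is equivalent to condition (7.1): for all ξ, η ∈ ℝⁿ, ⟨H(ξ)∇H(ξ), η⟩ = 0 if and only if ⟨ξ, H(η)∇H(η)⟩ = 0. -/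
/-!
For `x ≠ 0` the maximizers `z` of `⟪x, ·⟫` on the compact set `K = {H ≤ 1}` satisfy `H z = 1`
and, by a Lagrange-multiplier argument, `∇H z = x / ⟪x, z⟫`; hence `Ψ = H∇H` is onto and all
maximizers have the same image under `Ψ`. Each of the two conditions makes the hyperplane `z⊥`
depend only on `Ψ z`, so the maximizer is unique. Then `H*`, the support function of `K`, is
differentiable at `x ≠ 0` with gradient the maximizer, and `Ψ* ∘ Ψ = id`: by convexity
`⟪∇H η, w⟫ ≤ H w`, so the maximizer for `Ψ η` is `η / H η`.

With `Ψ* ∘ Ψ = id`, (1.12) at `x = Ψ η` reads `sgn⟪Ψ ξ, η⟫ = sgn⟪ξ, Ψ η⟫`, which contains (7.1).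
Conversely, under (7.1) the continuous function `⟪ξ, Ψ ·⟫` has no zero on the open half-spaces
`{±⟪Ψ ξ, ·⟫ > 0}`; these are connected, so it keeps there the signs it has at `±ξ`. This is the
same sign identity, i.e. (1.12).
-/

open scoped InnerProductSpace Classical
open Set Filter Topology

noncomputable section

section Gauge

variable {E : Type*} [NormedAddCommGroup E] [InnerProductSpace ℝ E]

structure IsRegularGauge (H : E → ℝ) : Prop where
  contDiffOn : ContDiffOn ℝ 1 H {0}ᶜ
  map_smul : ∀ t : ℝ, 0 < t → ∀ ξ : E, ξ ≠ 0 → H (t • ξ) = t * H ξ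
  map_zero : H 0 = 0
  pos : ∀ ξ : E, ξ ≠ 0 → 0 < H ξ

namespace IsRegularGauge

variable {H : E → ℝ}

theorem differentiableAt (hH : IsRegularGauge H) {ξ : E} (hξ : ξ ≠ 0) :
    DifferentiableAt ℝ H ξ :=
  (hH.contDiffOn.differentiableOn one_ne_zero).differentiableAt
    (isOpen_compl_singleton.mem_nhds hξ)

theorem nonneg (hH : IsRegularGauge H) (ξ : E) : 0 ≤ H ξ := by
  rcases eq_or_ne ξ 0 with rfl | hξ
  · exact hH.map_zero.ge
  · exact (hH.pos ξ hξ).le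

theorem apply_smul (hH : IsRegularGauge H) {t : ℝ} (ht : 0 < t) (ξ : E) : H (t • ξ) = t * H ξ := by
  rcases eq_or_ne ξ 0 with rfl | hξ
  · rw [smul_zero, hH.map_zero, mul_zero]
  · exact hH.map_smul t ht ξ hξ

theorem apply_inv_smul_self (hH : IsRegularGauge H) {ξ : E} (hξ : ξ ≠ 0) :
    H ((H ξ)⁻¹ • ξ) = 1 := by
  rw [hH.apply_smul (inv_pos.2 (hH.pos ξ hξ)), inv_mul_cancel₀ (hH.pos ξ hξ).ne']

theorem apply_inv_smul_lt_one_iff (hH : IsRegularGauge H) {c : ℝ} (hc : 0 < c) (ξ : E) :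
    H (c⁻¹ • ξ) < 1 ↔ H ξ < c := by
  rw [hH.apply_smul (inv_pos.2 hc), inv_mul_lt_iff₀ hc, mul_one]

theorem add_le (hH : IsRegularGauge H) (hconv : Convex ℝ {ξ : E | H ξ < 1}) (a b : E) :
    H (a + b) ≤ H a + H b := by
  refine le_of_forall_pos_lt_add fun ε hε => ?_
  set s := H a + ε / 2
  set t := H b + ε / 2
  have hs : 0 < s := by have := hH.nonneg a; positivity
  have ht : 0 < t := by have := hH.nonneg b; positivity
  have hmem := hconv ((hH.apply_inv_smul_lt_one_iff hs a).2 (by simp only [s]; linarith))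
    ((hH.apply_inv_smul_lt_one_iff ht b).2 (by simp only [t]; linarith))
    (div_pos hs (add_pos hs ht)).le (div_pos ht (add_pos hs ht)).le
    (by field_simp)
  have hcomb : (s / (s + t)) • s⁻¹ • a + (t / (s + t)) • t⁻¹ • b = (s + t)⁻¹ • (a + b) := by
    simp only [smul_smul, smul_add]
    congr 2 <;> field_simp
  rw [hcomb, mem_ofPred_eq, hH.apply_inv_smul_lt_one_iff (add_pos hs ht)] at hmem
  linarith [show s + t = H a + H b + ε by ring]

theorem hasDerivAt_line [CompleteSpace E] (hH : IsRegularGauge H) {ξ : E} (hξ : ξ ≠ 0) (v : E) :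
    HasDerivAt (fun t : ℝ => H (ξ + t • v)) ⟪gradient H ξ, v⟫_ℝ 0 :=
  (hH.differentiableAt hξ).hasGradientAt.hasFDerivAt.hasLineDerivAt v

theorem inner_gradient_self [CompleteSpace E] (hH : IsRegularGauge H) {ξ : E} (hξ : ξ ≠ 0) :
    ⟪gradient H ξ, ξ⟫_ℝ = H ξ := by
  have hline : (fun t : ℝ => (1 + t) * H ξ) =ᶠ[𝓝 0] fun t => H (ξ + t • ξ) := by
    filter_upwards [eventually_gt_nhds (show (-1 : ℝ) < 0 by norm_num)] with t ht
    rw [← hH.apply_smul (by linarith), add_smul, one_smul]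
  refine (hH.hasDerivAt_line hξ ξ).unique (HasDerivAt.congr_of_eventuallyEq ?_ hline.symm)
  simpa using ((hasDerivAt_id (0 : ℝ)).const_add 1).mul_const (H ξ)

theorem inner_gradient_le [CompleteSpace E] (hH : IsRegularGauge H)
    (hconv : Convex ℝ {ξ : E | H ξ < 1}) {ξ : E} (hξ : ξ ≠ 0) (z : E) :
    ⟪gradient H ξ, z⟫_ℝ ≤ H z := by
  refine le_of_tendsto (hH.hasDerivAt_line hξ z).tendsto_slope_zero_right ?_
  filter_upwards [self_mem_nhdsWithin] with t (ht : 0 < t)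
  have := hH.add_le hconv ξ (t • z)
  rw [hH.apply_smul ht] at this
  rw [zero_add, zero_smul, add_zero, smul_eq_mul, inv_mul_le_iff₀ ht]
  linarith

theorem gradient_smul [CompleteSpace E] (hH : IsRegularGauge H) {t : ℝ} (ht : 0 < t) {ξ : E}
    (hξ : ξ ≠ 0) : gradient H (t • ξ) = gradient H ξ := by
  have hscaled : HasFDerivAt (fun w => H (t • w))
      ((InnerProductSpace.toDual ℝ E (gradient H (t • ξ))).comp (t • ContinuousLinearMap.id ℝ E))
      ξ :=
    (hH.differentiableAt (smul_ne_zero ht.ne' hξ)).hasGradientAt.hasFDerivAt.comp ξ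
      ((ContinuousLinearMap.id ℝ E).hasFDerivAt.const_smul t)
  have hhom : (fun w => t * H w) =ᶠ[𝓝 ξ] fun w => H (t • w) :=
    Eventually.of_forall fun w => (hH.apply_smul ht w).symm
  have hL := (hscaled.congr_of_eventuallyEq hhom).unique
    ((hH.differentiableAt hξ).hasGradientAt.hasFDerivAt.const_mul t)
  refine ext_inner_right ℝ fun v => mul_left_cancel₀ ht.ne' ?_
  simpa [real_inner_smul_right] using DFunLike.congr_fun hL v

theorem exists_pos_mul_norm_le [ProperSpace E] (hH : IsRegularGauge H) :
    ∃ m > 0, ∀ w : E, m * ‖w‖ ≤ H w := by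
  rcases (Metric.sphere (0 : E) 1).eq_empty_or_nonempty with hS | hS
  · refine ⟨1, one_pos, fun w => ?_⟩
    rcases eq_or_ne w 0 with rfl | hw
    · simp [hH.map_zero]
    · have : ‖w‖⁻¹ • w ∈ Metric.sphere (0 : E) 1 := by
        simp [norm_smul, inv_mul_cancel₀ (norm_ne_zero_iff.2 hw)]
      simp [hS] at this
  have hSH : ContinuousOn H (Metric.sphere (0 : E) 1) :=
    hH.contDiffOn.continuousOn.mono fun w hw h0 => by simp_all
  obtain ⟨u, hu, hmin⟩ := (isCompact_sphere (0 : E) 1).exists_isMinOn hS hSH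
  refine ⟨H u, hH.pos u (ne_zero_of_mem_unit_sphere ⟨u, hu⟩), fun w => ?_⟩
  rcases eq_or_ne w 0 with rfl | hw
  · simp [hH.map_zero]
  have hw' : 0 < ‖w‖ := norm_pos_iff.2 hw
  have := isMinOn_iff.1 hmin (‖w‖⁻¹ • w) (by simp [norm_smul, inv_mul_cancel₀ hw'.ne'])
  rw [hH.apply_smul (inv_pos.2 hw'), inv_mul_eq_div, le_div_iff₀ hw'] at this
  exact this

theorem isCompact_sublevel [ProperSpace E] (hH : IsRegularGauge H) :
    IsCompact {w : E | H w ≤ 1} := by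
  obtain ⟨m, hm, hle⟩ := hH.exists_pos_mul_norm_le
  have hcompl : {w : E | H w ≤ 1}ᶜ = {0}ᶜ ∩ H ⁻¹' Ioi 1 := by
    ext w
    simp only [mem_compl_iff, mem_ofPred_eq, not_le, mem_inter_iff, mem_singleton_iff,
      mem_preimage, mem_Ioi]
    exact ⟨fun hw => ⟨by rintro rfl; linarith [hH.map_zero], hw⟩, And.right⟩
  refine Metric.isCompact_of_isClosed_isBounded ?_ ?_
  · rw [← isOpen_compl_iff, hcompl]
    exact hH.contDiffOn.continuousOn.isOpen_inter_preimage isOpen_compl_singleton isOpen_Ioi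
  · refine (Metric.isBounded_closedBall (x := (0 : E)) (r := m⁻¹)).subset fun w hw => ?_
    rw [Metric.mem_closedBall, dist_zero_right, ← one_div, le_div_iff₀' hm]
    exact (hle w).trans hw

theorem exists_isMaxOn_inner [ProperSpace E] (hH : IsRegularGauge H) (x : E) :
    ∃ z, H z ≤ 1 ∧ IsMaxOn (⟪x, ·⟫_ℝ) {w | H w ≤ 1} z :=
  hH.isCompact_sublevel.exists_isMaxOn ⟨0, by simp [hH.map_zero]⟩
    (continuous_const.inner continuous_id).continuousOn

theorem inner_le_mul_of_isMaxOn (hH : IsRegularGauge H) {x z : E}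
    (hz : IsMaxOn (⟪x, ·⟫_ℝ) {w | H w ≤ 1} z) (w : E) : ⟪x, w⟫_ℝ ≤ ⟪x, z⟫_ℝ * H w := by
  rcases eq_or_ne w 0 with rfl | hw
  · simp [hH.map_zero]
  have := isMaxOn_iff.1 hz _ (hH.apply_inv_smul_self hw).le
  rwa [real_inner_smul_right, inv_mul_le_iff₀ (hH.pos w hw), mul_comm] at this

theorem inner_pos_of_isMaxOn (hH : IsRegularGauge H) {x z : E} (hx : x ≠ 0)
    (hz : IsMaxOn (⟪x, ·⟫_ℝ) {w | H w ≤ 1} z) : 0 < ⟪x, z⟫_ℝ :=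
  pos_of_mul_pos_left ((real_inner_self_pos.2 hx).trans_le (hH.inner_le_mul_of_isMaxOn hz x))
    (hH.nonneg x)

theorem eq_one_of_isMaxOn (hH : IsRegularGauge H) {x z : E} (hx : x ≠ 0) (hzK : H z ≤ 1)
    (hz : IsMaxOn (⟪x, ·⟫_ℝ) {w | H w ≤ 1} z) : H z = 1 := by
  have hM := hH.inner_pos_of_isMaxOn hx hz
  have := hH.inner_le_mul_of_isMaxOn hz z
  exact hzK.antisymm ((le_mul_iff_one_le_right hM).1 this)

theorem gradient_eq_of_isMaxOn [CompleteSpace E] (hH : IsRegularGauge H) {x z : E} (hx : x ≠ 0)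
    (hzK : H z ≤ 1) (hz : IsMaxOn (⟪x, ·⟫_ℝ) {w | H w ≤ 1} z) :
    gradient H z = (⟪x, z⟫_ℝ)⁻¹ • x := by
  set M := ⟪x, z⟫_ℝ
  have hM : 0 < M := hH.inner_pos_of_isMaxOn hx hz
  have hz0 : z ≠ 0 := by rintro rfl; simp [M] at hM
  -- `M H - ⟪x, ·⟫` is nonnegative and vanishes at `z`
  have hmin : IsLocalMin (fun w => M * H w - ⟪x, w⟫_ℝ) z := Eventually.of_forall fun w => by
    change M * H z - M ≤ M * H w - ⟪x, w⟫_ℝ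
    rw [hH.eq_one_of_isMaxOn hx hzK hz, mul_one, sub_self, sub_nonneg]
    exact hH.inner_le_mul_of_isMaxOn hz w
  have hzero := hmin.hasFDerivAt_eq_zero
    (((hH.differentiableAt hz0).hasGradientAt.hasFDerivAt.const_mul M).sub
      (innerSL ℝ x).hasFDerivAt)
  refine ext_inner_right ℝ fun v => ?_
  have : M * ⟪gradient H z, v⟫_ℝ = ⟪x, v⟫_ℝ := by
    simpa [sub_eq_zero] using DFunLike.congr_fun hzero v
  rw [real_inner_smul_left, ← this, inv_mul_cancel_left₀ hM.ne']

end IsRegularGauge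

theorem eq_of_inner_eq_of_forall_inner_eq_zero {x z₁ z₂ : E} (h : ⟪x, z₁⟫_ℝ = ⟪x, z₂⟫_ℝ)
    (h₀ : ⟪x, z₁⟫_ℝ ≠ 0) (hker : ∀ v, ⟪z₁, v⟫_ℝ = 0 → ⟪z₂, v⟫_ℝ = 0) : z₁ = z₂ := by
  have hspan : z₂ ∈ (ℝ ∙ z₁)ᗮᗮ := fun u hu => by
    rw [real_inner_comm]
    exact hker u (Submodule.mem_orthogonal_singleton_iff_inner_right.1 hu)
  rw [Submodule.orthogonal_orthogonal] at hspan
  obtain ⟨c, rfl⟩ := Submodule.mem_span_singleton.1 hspan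
  rw [real_inner_smul_right] at h
  rw [(mul_eq_right₀ h₀).1 h.symm, one_smul]

theorem continuousAt_of_isMaxOn_inner {K : Set E} (hK : IsCompact K) {Z : E → E}
    (hZK : ∀ y, Z y ∈ K) (hZ : ∀ y, IsMaxOn (⟪y, ·⟫_ℝ) K (Z y)) {x : E}
    (huniq : {z ∈ K | IsMaxOn (⟪x, ·⟫_ℝ) K z}.Subsingleton) : ContinuousAt Z x := by
  refine hK.tendsto_nhds_of_unique_mapClusterPt (Eventually.of_forall hZK) fun z hzK hz => ?_
  refine huniq ⟨hzK, isMaxOn_iff.2 fun w hw => ?_⟩ ⟨hZK x, hZ x⟩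
  obtain ⟨ψ, hZψ, hψ⟩ := hz.exists_seq_tendsto
  exact le_of_tendsto_of_tendsto' (hψ.inner tendsto_const_nhds) (hψ.inner hZψ)
    fun k => isMaxOn_iff.1 (hZ (ψ k)) w hw

theorem hasGradientAt_inner_of_isMaxOn [CompleteSpace E] {K : Set E} {Z : E → E}
    (hZK : ∀ y, Z y ∈ K) (hZ : ∀ y, IsMaxOn (⟪y, ·⟫_ℝ) K (Z y)) {x : E}
    (hZx : ContinuousAt Z x) : HasGradientAt (fun y => ⟪y, Z y⟫_ℝ) (Z x) x := by
  rw [hasGradientAt_iff_isLittleO_nhds_zero, Asymptotics.isLittleO_iff]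
  intro c hc
  have hZv : Tendsto (fun v => Z (x + v)) (𝓝 0) (𝓝 (Z x)) :=
    hZx.tendsto.comp ((continuous_const.add continuous_id).tendsto' 0 x (add_zero x))
  filter_upwards [Metric.tendsto_nhds.1 hZv c hc] with v hv
  -- the remainder is squeezed between `0` and `⟪v, Z (x + v) - Z x⟫`
  have hlow := isMaxOn_iff.1 (hZ (x + v)) _ (hZK x)
  have hup := isMaxOn_iff.1 (hZ x) _ (hZK (x + v))
  have hbound := abs_le.1 (abs_real_inner_le_norm v (Z (x + v) - Z x))
  have hvc := mul_le_mul_of_nonneg_left (dist_eq_norm (Z (x + v)) (Z x) ▸ hv.le) (norm_nonneg v)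
  simp only [inner_add_left, inner_sub_right, real_inner_comm (Z x) v] at hlow hup hbound ⊢
  rw [Real.norm_eq_abs, abs_le]
  constructor <;> linarith

end Gauge

section Euclidean

variable {n : ℕ} {H : EuclideanSpace ℝ (Fin n) → ℝ}

local notation "E" => EuclideanSpace ℝ (Fin n)

@[simp]
theorem Psi_zero : Psi H 0 = 0 := if_pos rfl

theorem Psi_of_ne_zero {ξ : E} (hξ : ξ ≠ 0) : Psi H ξ = H ξ • gradient H ξ := if_neg hξ

namespace IsRegularGauge

theorem inner_Psi_self (hH : IsRegularGauge H) (ξ : E) : ⟪Psi H ξ, ξ⟫_ℝ = H ξ ^ 2 := by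
  rcases eq_or_ne ξ 0 with rfl | hξ
  · simp [hH.map_zero]
  · rw [Psi_of_ne_zero hξ, real_inner_smul_left, hH.inner_gradient_self hξ, sq]

theorem Psi_smul (hH : IsRegularGauge H) {t : ℝ} (ht : 0 < t) (ξ : E) :
    Psi H (t • ξ) = t • Psi H ξ := by
  rcases eq_or_ne ξ 0 with rfl | hξ
  · simp
  · rw [Psi_of_ne_zero hξ, Psi_of_ne_zero (smul_ne_zero ht.ne' hξ), hH.gradient_smul ht hξ,
      hH.apply_smul ht, mul_smul]

theorem continuousOn_Psi (hH : IsRegularGauge H) : ContinuousOn (Psi H) {0}ᶜ := by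
  refine (hH.contDiffOn.continuousOn.smul ?_).congr fun ξ hξ => Psi_of_ne_zero hξ
  exact (InnerProductSpace.toDual ℝ E).symm.continuous.comp_continuousOn
    (hH.contDiffOn.continuousOn_fderiv_of_isOpen isOpen_compl_singleton le_rfl)

theorem Psi_eq_of_isMaxOn (hH : IsRegularGauge H) {x z : E} (hx : x ≠ 0) (hzK : H z ≤ 1)
    (hz : IsMaxOn (⟪x, ·⟫_ℝ) {w | H w ≤ 1} z) : Psi H z = (⟪x, z⟫_ℝ)⁻¹ • x := by
  have hz0 : z ≠ 0 := by rintro rfl; simpa using hH.inner_pos_of_isMaxOn hx hz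
  rw [Psi_of_ne_zero hz0, hH.eq_one_of_isMaxOn hx hzK hz, hH.gradient_eq_of_isMaxOn hx hzK hz,
    one_smul]

theorem Psi_surjective (hH : IsRegularGauge H) : Function.Surjective (Psi H) := by
  intro x
  rcases eq_or_ne x 0 with rfl | hx
  · exact ⟨0, Psi_zero⟩
  obtain ⟨z, hzK, hz⟩ := hH.exists_isMaxOn_inner x
  have hM := hH.inner_pos_of_isMaxOn hx hz
  refine ⟨⟪x, z⟫_ℝ • z, ?_⟩
  rw [hH.Psi_smul hM, hH.Psi_eq_of_isMaxOn hx hzK hz, smul_inv_smul₀ hM.ne']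

theorem dualFn_eq_of_isMaxOn (hH : IsRegularGauge H) {x z : E} (hx : x ≠ 0) (hzK : H z ≤ 1)
    (hz : IsMaxOn (⟪x, ·⟫_ℝ) {w | H w ≤ 1} z) : dualFn H x = ⟪x, z⟫_ℝ := by
  have hz0 : z ≠ 0 := by rintro rfl; simpa using hH.inner_pos_of_isMaxOn hx hz
  have hzn : 0 < ‖z‖ := norm_pos_iff.2 hz0
  have hzS : ‖z‖⁻¹ • z ∈ Metric.sphere (0 : E) 1 := by simp [norm_smul, inv_mul_cancel₀ hzn.ne']
  have hle : ∀ ξ : Metric.sphere (0 : E) 1, ⟪x, (ξ : E)⟫_ℝ / H ξ ≤ ⟪x, z⟫_ℝ := fun ξ =>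
    div_le_of_le_mul₀ (hH.nonneg ξ) (hH.inner_pos_of_isMaxOn hx hz).le
      (hH.inner_le_mul_of_isMaxOn hz ξ)
  have : Nonempty (Metric.sphere (0 : E) 1) := ⟨⟨_, hzS⟩⟩
  refine (ciSup_le hle).antisymm (le_ciSup_of_le ⟨_, forall_mem_range.2 hle⟩ ⟨_, hzS⟩ ?_)
  rw [real_inner_smul_right, hH.apply_smul (inv_pos.2 hzn), hH.eq_one_of_isMaxOn hx hzK hz,
    mul_one, mul_div_cancel_left₀ _ (inv_ne_zero hzn.ne')]

theorem hasGradientAt_dualFn (hH : IsRegularGauge H) {x z : E} (hx : x ≠ 0) (hzK : H z ≤ 1)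
    (hz : IsMaxOn (⟪x, ·⟫_ℝ) {w | H w ≤ 1} z)
    (huniq : {z ∈ {w | H w ≤ 1} | IsMaxOn (⟪x, ·⟫_ℝ) {w | H w ≤ 1} z}.Subsingleton) :
    HasGradientAt (dualFn H) z x := by
  choose Z hZK hZ using hH.exists_isMaxOn_inner
  obtain rfl : Z x = z := huniq ⟨hZK x, hZ x⟩ ⟨hzK, hz⟩
  refine (hasGradientAt_inner_of_isMaxOn hZK hZ
    (continuousAt_of_isMaxOn_inner hH.isCompact_sublevel hZK hZ huniq)).congr_of_eventuallyEq ?_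
  filter_upwards [isOpen_compl_singleton.mem_nhds hx] with y hy
  exact hH.dualFn_eq_of_isMaxOn hy (hZK y) (hZ y)

theorem Psi_dualFn_Psi (hH : IsRegularGauge H) (hconv : Convex ℝ {ξ : E | H ξ < 1})
    (huniq : ∀ x : E, x ≠ 0 →
      {z ∈ {w | H w ≤ 1} | IsMaxOn (⟪x, ·⟫_ℝ) {w | H w ≤ 1} z}.Subsingleton)
    (η : E) : Psi (dualFn H) (Psi H η) = η := by
  rcases eq_or_ne η 0 with rfl | hη
  · simp
  have hHη := hH.pos η hη
  have hxη := hH.inner_Psi_self η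
  have hx0 : Psi H η ≠ 0 := fun h => by
    rw [h, inner_zero_left] at hxη
    exact (pow_pos hHη 2).ne' hxη.symm
  set z := (H η)⁻¹ • η
  have hxz : ⟪Psi H η, z⟫_ℝ = H η := by
    rw [real_inner_smul_right, hxη, sq, inv_mul_cancel_left₀ hHη.ne']
  have hz : IsMaxOn (⟪Psi H η, ·⟫_ℝ) {w | H w ≤ 1} z := isMaxOn_iff.2 fun w hw => by
    rw [hxz, Psi_of_ne_zero hη, real_inner_smul_left]
    exact mul_le_of_le_one_right hHη.le ((hH.inner_gradient_le hconv hη w).trans hw)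
  have hzK : H z ≤ 1 := (hH.apply_inv_smul_self hη).le
  rw [Psi_of_ne_zero hx0, (hH.hasGradientAt_dualFn hx0 hzK hz (huniq _ hx0)).gradient,
    hH.dualFn_eq_of_isMaxOn hx0 hzK hz, hxz, smul_inv_smul₀ hHη.ne']

theorem subsingleton_isMaxOn_of_inner_eq_zero_of_Psi_eq (hH : IsRegularGauge H)
    (hdet : ∀ z₁ z₂ v : E, Psi H z₁ = Psi H z₂ → ⟪z₁, v⟫_ℝ = 0 → ⟪z₂, v⟫_ℝ = 0)
    {x : E} (hx : x ≠ 0) :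
    {z ∈ {w | H w ≤ 1} | IsMaxOn (⟪x, ·⟫_ℝ) {w | H w ≤ 1} z}.Subsingleton := by
  rintro z₁ ⟨h₁K, h₁⟩ z₂ ⟨h₂K, h₂⟩
  have hM : ⟪x, z₁⟫_ℝ = ⟪x, z₂⟫_ℝ := le_antisymm (h₂ h₁K) (h₁ h₂K)
  have hPsi : Psi H z₁ = Psi H z₂ := by
    rw [hH.Psi_eq_of_isMaxOn hx h₁K h₁, hH.Psi_eq_of_isMaxOn hx h₂K h₂, hM]
  exact eq_of_inner_eq_of_forall_inner_eq_zero hM (hH.inner_pos_of_isMaxOn hx h₁).ne'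
    fun v => hdet z₁ z₂ v hPsi

theorem inner_eq_zero_of_Psi_eq_of_orthogonal_symm (hH : IsRegularGauge H)
    (hsymm : ∀ ξ η : E, ⟪Psi H ξ, η⟫_ℝ = 0 ↔ ⟪ξ, Psi H η⟫_ℝ = 0)
    {z₁ z₂ v : E} (hPsi : Psi H z₁ = Psi H z₂) (hv : ⟪z₁, v⟫_ℝ = 0) : ⟪z₂, v⟫_ℝ = 0 := by
  obtain ⟨η, rfl⟩ := hH.Psi_surjective v
  rw [← hsymm, ← hPsi, hsymm]
  exact hv

theorem inner_Psi_pos_of_orthogonal_symm (hH : IsRegularGauge H)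
    (hsymm : ∀ ξ η : E, ⟪Psi H ξ, η⟫_ℝ = 0 ↔ ⟪ξ, Psi H η⟫_ℝ = 0)
    {ξ η : E} (h : 0 < ⟪Psi H ξ, η⟫_ℝ) : 0 < ⟪ξ, Psi H η⟫_ℝ := by
  have hξ : ξ ≠ 0 := by rintro rfl; simp at h
  refine (convex_halfSpace_gt (innerSL ℝ (Psi H ξ)).toLinearMap.isLinear 0).isPreconnected.lt_of_ne
    (f := (⟪ξ, Psi H ·⟫_ℝ)) ?_ (fun w hw h0 => hw.ne' ((hsymm ξ w).2 h0)) ⟨ξ, ?_, ?_⟩ h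
  · exact (continuousOn_const.inner hH.continuousOn_Psi).mono fun w hw (h0 : w = 0) => by
      simp [h0] at hw
  · show 0 < ⟪Psi H ξ, ξ⟫_ℝ
    rw [hH.inner_Psi_self]
    exact pow_pos (hH.pos ξ hξ) 2
  · rw [real_inner_comm, hH.inner_Psi_self]
    exact pow_pos (hH.pos ξ hξ) 2

theorem inner_Psi_neg_of_orthogonal_symm (hH : IsRegularGauge H)
    (hsymm : ∀ ξ η : E, ⟪Psi H ξ, η⟫_ℝ = 0 ↔ ⟪ξ, Psi H η⟫_ℝ = 0)
    {ξ η : E} (h : ⟪Psi H ξ, η⟫_ℝ < 0) : ⟪ξ, Psi H η⟫_ℝ < 0 := by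
  have hξ : ξ ≠ 0 := by rintro rfl; simp at h
  refine (convex_halfSpace_lt (innerSL ℝ (Psi H ξ)).toLinearMap.isLinear 0).isPreconnected.gt_of_ne
    (f := (⟪ξ, Psi H ·⟫_ℝ)) ?_ (fun w hw h0 => hw.ne ((hsymm ξ w).2 h0)) ⟨-ξ, ?_, ?_⟩ h
  · exact (continuousOn_const.inner hH.continuousOn_Psi).mono fun w hw (h0 : w = 0) => by
      simp [h0] at hw
  · show ⟪Psi H ξ, -ξ⟫_ℝ < 0
    rw [inner_neg_right, hH.inner_Psi_self, neg_lt_zero]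
    exact pow_pos (hH.pos ξ hξ) 2
  · rw [real_inner_comm, ← neg_neg ξ, inner_neg_right, neg_neg, hH.inner_Psi_self, neg_lt_zero]
    exact pow_pos (hH.pos _ (neg_ne_zero.2 hξ)) 2

theorem sign_inner_Psi_comm (hH : IsRegularGauge H)
    (hsymm : ∀ ξ η : E, ⟪Psi H ξ, η⟫_ℝ = 0 ↔ ⟪ξ, Psi H η⟫_ℝ = 0) (ξ η : E) :
    Real.sign ⟪Psi H ξ, η⟫_ℝ = Real.sign ⟪ξ, Psi H η⟫_ℝ := by
  rcases lt_trichotomy ⟪Psi H ξ, η⟫_ℝ 0 with h | h | h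
  · rw [Real.sign_of_neg h, Real.sign_of_neg (hH.inner_Psi_neg_of_orthogonal_symm hsymm h)]
  · rw [h, (hsymm ξ η).1 h]
  · rw [Real.sign_of_pos h, Real.sign_of_pos (hH.inner_Psi_pos_of_orthogonal_symm hsymm h)]

end IsRegularGauge

theorem inner_eq_zero_of_Psi_eq_of_sign_eq
    (hsign : ∀ ξ x : E, Real.sign ⟪Psi H ξ, Psi (dualFn H) x⟫_ℝ = Real.sign ⟪ξ, x⟫_ℝ)
    {z₁ z₂ v : E} (hPsi : Psi H z₁ = Psi H z₂) (hv : ⟪z₁, v⟫_ℝ = 0) : ⟪z₂, v⟫_ℝ = 0 := by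
  rw [← Real.sign_eq_zero_iff, ← hsign, ← hPsi, hsign, hv, Real.sign_zero]

end Euclidean

/-- Proposition 7.1: for `H ∈ C¹(ℝⁿ \ {0})` positively 1-homogeneous, positive
off the origin, with strictly convex unit ball, condition (1.12), namely
`sgn⟨H(ξ)∇H(ξ), H*(x)∇H*(x)⟩ = sgn⟨ξ, x⟩` for all `ξ, x`, is equivalent to condition (7.1):
`⟨H(ξ)∇H(ξ), η⟩ = 0 ↔ ⟨ξ, H(η)∇H(η)⟩ = 0` for all `ξ, η`. -/
theorem condition_1_12_iff_7_1 {n : ℕ} (H : EuclideanSpace ℝ (Fin n) → ℝ)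
    (hreg : ContDiffOn ℝ 1 H {(0 : EuclideanSpace ℝ (Fin n))}ᶜ)
    (hhom : ∀ t : ℝ, 0 < t → ∀ ξ : EuclideanSpace ℝ (Fin n), ξ ≠ 0 → H (t • ξ) = t * H ξ)
    (hH0 : H 0 = 0)
    (hpos : ∀ ξ : EuclideanSpace ℝ (Fin n), ξ ≠ 0 → 0 < H ξ)
    (hconv : StrictConvex ℝ {ξ : EuclideanSpace ℝ (Fin n) | H ξ < 1}) :
    (∀ ξ x : EuclideanSpace ℝ (Fin n),
        Real.sign ⟪Psi H ξ, Psi (dualFn H) x⟫_ℝ = Real.sign ⟪ξ, x⟫_ℝ)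
      ↔ ∀ ξ η : EuclideanSpace ℝ (Fin n),
          (⟪Psi H ξ, η⟫_ℝ = 0 ↔ ⟪ξ, Psi H η⟫_ℝ = 0) := by
  have hH : IsRegularGauge H := ⟨hreg, hhom, hH0, hpos⟩
  have hinv (hdet : ∀ z₁ z₂ v, Psi H z₁ = Psi H z₂ → ⟪z₁, v⟫_ℝ = 0 → ⟪z₂, v⟫_ℝ = 0)
      (η : EuclideanSpace ℝ (Fin n)) : Psi (dualFn H) (Psi H η) = η :=
    hH.Psi_dualFn_Psi hconv.convex
      (fun _ => hH.subsingleton_isMaxOn_of_inner_eq_zero_of_Psi_eq hdet) η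
  constructor
  · intro hsign ξ η
    have h := hsign ξ (Psi H η)
    rw [hinv (fun _ _ _ => inner_eq_zero_of_Psi_eq_of_sign_eq hsign)] at h
    rw [← Real.sign_eq_zero_iff, h, Real.sign_eq_zero_iff]
  · intro hsymm ξ x
    obtain ⟨η, rfl⟩ := hH.Psi_surjective x
    rw [hinv (fun _ _ _ => hH.inner_eq_zero_of_Psi_eq_of_orthogonal_symm hsymm)]
    exact hH.sign_inner_Psi_comm hsymm ξ η

end
end

section
/- Let r : [0, π/2] → (0, +∞) be a C² function such that r(θ)r''(θ) < 2r'(θ)² + r(θ)² for almost every θ ∈ [0, π/2] and r'(0) = r'(π/2) = 0. Then −cot η < r'(η)/r(η) < tan η for every η ∈ (0, π/2). -/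
open Real MeasureTheory Topology Set

/-
The function `φ θ = arctan (r' θ / r θ) - θ` has derivative
`(r r'' - 2 r'² - r²) / (r² + r'²)`, which is continuous and negative almost everywhere, hence
nonpositive everywhere and not identically zero on any interval; so `φ` is strictly decreasing.
The boundary conditions give `φ 0 = 0` and `φ (π/2) = -π/2`, hence `η - π/2 < arctan (r'/r) < η`
on `(0, π/2)`, and applying `tan` gives the claim. Geometrically, the inequality says that the
polar curve `ρ = r(θ)` has positive curvature, and `-φ` is, up to a constant, its tangent angle.
-/

theorem ContDiffOn.hasDerivAt_derivWithin {𝕜 F : Type*} [NontriviallyNormedField 𝕜]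
    [NormedAddCommGroup F] [NormedSpace 𝕜 F] {f : 𝕜 → F} {s : Set 𝕜} {x : 𝕜}
    {n : WithTop ℕ∞} (hf : ContDiffOn 𝕜 n f s) (hn : n ≠ 0) (hs : s ∈ 𝓝 x) :
    HasDerivAt f (derivWithin f s x) x := by
  rw [derivWithin_of_mem_nhds hs]
  exact ((hf.contDiffAt hs).differentiableAt hn).hasDerivAt

theorem ContinuousOn.nonpos_of_ae_neg {X : Type*} [TopologicalSpace X] [MeasurableSpace X]
    {μ : Measure X} [μ.IsOpenPosMeasure] {g : X → ℝ} {U : Set X} (hU : IsOpen U)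
    (hg : ContinuousOn g U) (hneg : ∀ᵐ x ∂μ, x ∈ U → g x < 0) : ∀ x ∈ U, g x ≤ 0 := by
  intro x hx
  by_contra! hpos
  obtain ⟨t, ⟨htU, hgt⟩, ht⟩ := (μ.dense_of_ae hneg).inter_open_nonempty _
    (hg.isOpen_inter_preimage hU isOpen_Ioi) ⟨x, hx, hpos⟩
  exact (ht htU).not_gt hgt

theorem strictAntiOn_Icc_of_hasDerivAt_of_ae_neg {f f' : ℝ → ℝ} {a b : ℝ}
    (hf : ContinuousOn f (Icc a b)) (hderiv : ∀ x ∈ Ioo a b, HasDerivAt f (f' x) x)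
    (hf' : ContinuousOn f' (Ioo a b)) (hneg : ∀ᵐ x, x ∈ Ioo a b → f' x < 0) :
    StrictAntiOn f (Icc a b) := by
  have hanti : AntitoneOn f (Icc a b) := by
    refine antitoneOn_of_hasDerivWithinAt_nonpos (f' := f') (convex_Icc a b) hf (fun x hx => ?_) ?_
    all_goals rw [interior_Icc] at *
    · exact (hderiv x hx).hasDerivWithinAt
    · exact hf'.nonpos_of_ae_neg isOpen_Ioo hneg
  intro x hx y hy hxy
  refine (hanti hx hy hxy.le).lt_of_ne fun heq => ?_
  -- `f` is constant on `[x, y]`, so `f'` vanishes on `(x, y)`, a set of positive measure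
  have hsub : Ioo x y ⊆ Ioo a b := Ioo_subset_Ioo hx.1 hy.2
  obtain ⟨t, hxyt, ht⟩ := (volume.dense_of_ae hneg).inter_open_nonempty _ isOpen_Ioo
    (nonempty_Ioo.2 hxy)
  have hconst : f =ᶠ[𝓝 t] fun _ => f x := by
    filter_upwards [Ioo_mem_nhds hxyt.1 hxyt.2] with s hs
    have hsI : s ∈ Icc a b := Ioo_subset_Icc_self (hsub hs)
    exact le_antisymm (hanti hx hsI hs.1.le) (heq ▸ hanti hsI hy hs.2.le)
  have hzero : f' t = 0 :=
    (hderiv t (hsub hxyt)).unique ((hasDerivAt_const t (f x)).congr_of_eventuallyEq hconst)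
  exact (ht (hsub hxyt)).ne hzero

theorem hasDerivAt_arctan_div_sub_id {r r' r'' : ℝ → ℝ} {x : ℝ}
    (hr : HasDerivAt r (r' x) x) (hr' : HasDerivAt r' (r'' x) x) (hx : r x ≠ 0) :
    HasDerivAt (fun θ => arctan (r' θ / r θ) - θ)
      ((r x * r'' x - (2 * r' x ^ 2 + r x ^ 2)) / (r x ^ 2 + r' x ^ 2)) x := by
  refine (((hasDerivAt_arctan _).comp x (hr'.div hr hx)).sub (hasDerivAt_id' x)).congr_deriv ?_
  have : r x ^ 2 + r' x ^ 2 ≠ 0 := by positivity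
  simp only [Pi.div_apply]
  field_simp
  ring

theorem Real.arctan_lt_iff_lt_tan {x η : ℝ} (h₁ : -(π / 2) < η) (h₂ : η < π / 2) :
    arctan x < η ↔ x < tan η := by
  rw [← arctan_strictMono.lt_iff_lt (a := x), arctan_tan h₁ h₂]

theorem Real.sub_pi_div_two_lt_arctan_iff {x η : ℝ} (h₁ : 0 < η) (h₂ : η < π) :
    η - π / 2 < arctan x ↔ -(cos η / sin η) < x := by
  rw [← arctan_strictMono.lt_iff_lt (b := x), ← neg_div, ← cos_sub_pi_div_two, ← sin_sub_pi_div_two,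
    ← tan_eq_sin_div_cos, arctan_tan (by linarith) (by linarith)]

/-- Lemma 7.3: if `r : [0, π/2] → (0, ∞)` is `C²` with
`r r'' < 2 r'² + r²` almost everywhere on `[0, π/2]` and `r'(0) = r'(π/2) = 0`, then
`−cot η < r'(η)/r(η) < tan η` for every `η ∈ (0, π/2)`. -/
theorem polar_slope_bounds (r : ℝ → ℝ)
    (hr : ContDiffOn ℝ 2 r (Set.Icc 0 (π / 2)))
    (hpos : ∀ θ ∈ Set.Icc (0 : ℝ) (π / 2), 0 < r θ)
    (hae : ∀ᵐ θ ∂(volume : Measure ℝ), θ ∈ Set.Icc (0 : ℝ) (π / 2) →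
      r θ * derivWithin (derivWithin r (Set.Icc 0 (π / 2))) (Set.Icc 0 (π / 2)) θ
        < 2 * derivWithin r (Set.Icc 0 (π / 2)) θ ^ 2 + r θ ^ 2)
    (h0 : derivWithin r (Set.Icc 0 (π / 2)) 0 = 0)
    (h2 : derivWithin r (Set.Icc 0 (π / 2)) (π / 2) = 0) :
    ∀ η ∈ Set.Ioo (0 : ℝ) (π / 2),
      -(cos η / sin η) < derivWithin r (Set.Icc 0 (π / 2)) η / r η ∧
      derivWithin r (Set.Icc 0 (π / 2)) η / r η < tan η := by
  intro η hη
  set I := Icc (0 : ℝ) (π / 2)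
  set r' := derivWithin r I
  set r'' := derivWithin r' I
  have hπ : (0 : ℝ) < π / 2 := by positivity
  have hr' : ContDiffOn ℝ 1 r' I := hr.derivWithin (uniqueDiffOn_Icc hπ) (by norm_num)
  have hrc : ContinuousOn r I := hr.continuousOn
  have hr'c : ContinuousOn r' I := hr'.continuousOn
  have hr'' : ContinuousOn r'' I := hr'.continuousOn_derivWithin (uniqueDiffOn_Icc hπ) le_rfl
  have hr0 : ∀ x ∈ I, r x ≠ 0 := fun x hx => (hpos x hx).ne'
  have hanti : StrictAntiOn (fun θ => arctan (r' θ / r θ) - θ) I := by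
    refine strictAntiOn_Icc_of_hasDerivAt_of_ae_neg ?_ (fun x hx => hasDerivAt_arctan_div_sub_id
      (hr.hasDerivAt_derivWithin two_ne_zero (Icc_mem_nhds hx.1 hx.2))
      (hr'.hasDerivAt_derivWithin one_ne_zero (Icc_mem_nhds hx.1 hx.2))
      (hr0 x (Ioo_subset_Icc_self hx))) ?_ ?_
    · exact (continuous_arctan.comp_continuousOn (hr'c.div hrc hr0)).sub continuousOn_id
    · refine (((hrc.mul hr'').sub ((continuousOn_const.mul (hr'c.pow 2)).add (hrc.pow 2))).div
        ((hrc.pow 2).add (hr'c.pow 2)) fun x hx => ?_).mono Ioo_subset_Icc_self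
      exact (add_pos_of_pos_of_nonneg (pow_pos (hpos x hx) 2) (sq_nonneg _)).ne'
    · filter_upwards [hae] with x hx hxI
      have := hpos x (Ioo_subset_Icc_self hxI)
      exact div_neg_of_neg_of_pos (by linarith [hx (Ioo_subset_Icc_self hxI)]) (by positivity)
  have hupper := hanti (left_mem_Icc.2 hπ.le) (Ioo_subset_Icc_self hη) hη.1
  have hlower := hanti (Ioo_subset_Icc_self hη) (right_mem_Icc.2 hπ.le) hη.2
  simp only [h0, h2, zero_div, arctan_zero, sub_zero] at hupper hlower
  exact ⟨(sub_pi_div_two_lt_arctan_iff hη.1 (by linarith [hη.2])).1 (by linarith),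
    (arctan_lt_iff_lt_tan (by linarith [hη.1]) hη.2).1 (by linarith)⟩
end
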